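/- arXiv:2310.20639 — 8 statements merged into one kernel-verified Lean document; each statement's English description precedes it below -/
import Mathlib

section
/- Let G be a connected graph and let η₁,…,ηₜ, ε₁,…,εₜ be edges such that η₁,…,ηₜ ∈ T, ε₁,…,εₜ ∉ T for a spanning tree T, ηᵢ lies in the fundamental cycle C(T,εᵢ) for all i, and ηᵢ ∉ C(T,εⱼ) for all j < i. Then (T \ {η₁,…,ηₜ}) ∪ {ε₁,…,εₜ} is also a spanning tree of G. -/
variable {V EdgeT : Type*} [Fintype V] [Fintype EdgeT] [DecidableEq V] [DecidableEq EdgeT]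

/-- `S` is (the edge set of) a spanning tree of the multigraph on vertex set `V`
whose edges are `EdgeT` with endpoint map `ends`. -/
def IsSpanningTree (ends : EdgeT → Sym2 V) (S : Finset EdgeT) : Prop :=
  (∀ ε ∈ S, ¬ (ends ε).IsDiag) ∧ Set.InjOn ends ↑S ∧
    (SimpleGraph.fromEdgeSet (↑(S.image ends) : Set (Sym2 V))).IsTree

/-- `η` is an edge of the fundamental cycle `C(T, ε)` of the non-tree edge `ε`
with respect to the spanning tree `T`: it is either `ε` itself, or a tree edge whose
exchange with `ε` again yields a spanning tree. -/
def InFundCycle (ends : EdgeT → Sym2 V) (T : Finset EdgeT) (ε η : EdgeT) : Prop :=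
  η = ε ∨ (η ∈ T ∧ IsSpanningTree ends (insert ε (T.erase η)))

open SimpleGraph Finset in
/-- The simple graph associated to a finset of multigraph edges. -/
def Gr (ends : EdgeT → Sym2 V) (S : Finset EdgeT) : SimpleGraph V :=
  SimpleGraph.fromEdgeSet (↑(S.image ends) : Set (Sym2 V))

namespace SwapAux

open SimpleGraph Finset

set_option linter.unusedSectionVars false

variable {ends : EdgeT → Sym2 V} {S T : Finset EdgeT} {e η η' ε ε' : EdgeT}

lemma sym2_cases (z : Sym2 V) : ∃ a b, z = s(a, b) := by
  induction z using Sym2.ind with | _ x y => exact ⟨x, y, rfl⟩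

lemma gr_mono {S S' : Finset EdgeT} (h : S ⊆ S') : Gr ends S ≤ Gr ends S' :=
  SimpleGraph.fromEdgeSet_mono (by exact_mod_cast Finset.image_subset_image h)

lemma gr_adj {a b : V} (hx : e ∈ S) (hab : ends e = s(a, b)) (hne : a ≠ b) :
    (Gr ends S).Adj a b := by
  rw [Gr, SimpleGraph.fromEdgeSet_adj]
  refine ⟨?_, hne⟩
  have := Finset.mem_image_of_mem ends hx
  rw [hab] at this
  exact_mod_cast this

lemma gr_del (hinj : Set.InjOn ends ↑S) (he : e ∈ S) :
    Gr ends S \ SimpleGraph.fromEdgeSet {ends e} = Gr ends (S.erase e) := by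
  ext a b
  simp only [SimpleGraph.sdiff_adj, Gr, SimpleGraph.fromEdgeSet_adj, Finset.coe_image,
    Set.mem_image, Finset.mem_coe, Set.mem_singleton_iff, Finset.mem_erase]
  constructor
  · rintro ⟨⟨⟨x, hx, hxe⟩, hne⟩, hnot⟩
    refine ⟨⟨x, ⟨?_, hx⟩, hxe⟩, hne⟩
    rintro rfl
    exact hnot ⟨hxe.symm, hne⟩
  · rintro ⟨⟨x, ⟨hxne, hx⟩, hxe⟩, hne⟩
    refine ⟨⟨⟨x, hx, hxe⟩, hne⟩, ?_⟩
    rintro ⟨heq, -⟩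
    exact hxne (hinj hx he (hxe.trans heq))

/-- Peeling one edge off a reachability statement. -/
lemma reachable_cases {G : SimpleGraph V} {x y u v : V} (h : G.Reachable u v) :
    (G \ SimpleGraph.fromEdgeSet {s(x, y)}).Reachable u v ∨
      (((G \ SimpleGraph.fromEdgeSet {s(x, y)}).Reachable u x ∨
        (G \ SimpleGraph.fromEdgeSet {s(x, y)}).Reachable u y) ∧
       ((G \ SimpleGraph.fromEdgeSet {s(x, y)}).Reachable v x ∨
        (G \ SimpleGraph.fromEdgeSet {s(x, y)}).Reachable v y)) := by
  obtain ⟨w⟩ := h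
  induction w with
  | nil => exact Or.inl (Reachable.refl _)
  | @cons a b c hadj p ih =>
    by_cases he : s(a, b) = s(x, y)
    · rw [Sym2.eq_iff] at he
      have ha : a = x ∨ a = y := by tauto
      have hb : b = x ∨ b = y := by tauto
      right
      refine ⟨by rcases ha with rfl | rfl; exacts [Or.inl (Reachable.refl _), Or.inr (Reachable.refl _)], ?_⟩
      rcases ih with hl | hr
      · rcases hb with rfl | rfl
        exacts [Or.inl hl.symm, Or.inr hl.symm]
      · exact hr.2
    · have hadj' : (G \ SimpleGraph.fromEdgeSet {s(x, y)}).Adj a b := by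
        rw [SimpleGraph.sdiff_adj, SimpleGraph.fromEdgeSet_adj]
        exact ⟨hadj, fun hc => he hc.1⟩
      rcases ih with hl | ⟨hb2, hc2⟩
      · exact Or.inl (hadj'.reachable.trans hl)
      · refine Or.inr ⟨?_, hc2⟩
        rcases hb2 with h' | h'
        exacts [Or.inl (hadj'.reachable.trans h'), Or.inr (hadj'.reachable.trans h')]


/-- Every tree edge is a bridge: removing it disconnects its endpoints. -/
lemma tree_cut (hS : IsSpanningTree ends S) (he : e ∈ S) {c d : V} (hcd : ends e = s(c, d)) :
    ¬ (Gr ends (S.erase e)).Reachable c d := by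
  have hmem : s(c, d) ∈ (Gr ends S).edgeSet := by
    rw [Gr, SimpleGraph.edgeSet_fromEdgeSet]
    refine ⟨?_, by rw [← hcd]; exact hS.1 e he⟩
    have := Finset.mem_image_of_mem ends he
    rw [hcd] at this
    exact_mod_cast this
  have hb := (SimpleGraph.isAcyclic_iff_forall_edge_isBridge.mp hS.2.2.IsAcyclic) hmem
  rw [SimpleGraph.isBridge_iff] at hb
  have heq : (Gr ends S) \ SimpleGraph.fromEdgeSet {s(c, d)} = Gr ends (S.erase e) := by
    rw [← hcd]; exact gr_del hS.2.1 he
  have hb2 : ¬ (Gr ends S \ SimpleGraph.fromEdgeSet {s(c, d)}).Reachable c d := hb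
  rwa [heq] at hb2

/-- Characterization of when a single swap yields a spanning tree. -/
lemma swap_iff (hT : IsSpanningTree ends T) (hη : η ∈ T) (hε : ε ∉ T)
    (hd : ¬ (ends ε).IsDiag) {c d : V} (hcd : ends ε = s(c, d)) :
    IsSpanningTree ends (insert ε (T.erase η)) ↔ ¬ (Gr ends (T.erase η)).Reachable c d := by
  have hεe : ε ∉ T.erase η := fun h => hε (Finset.mem_of_mem_erase h)
  constructor
  · intro hS
    have := tree_cut hS (Finset.mem_insert_self ε _) hcd
    rwa [Finset.erase_insert hεe] at this
  · intro hr
    have hne : c ≠ d := fun h => hd (by rw [hcd, h]; exact Sym2.mk_isDiag_iff.mpr rfl)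
    -- ends ε is not an endpoint-pair of any remaining tree edge
    have hnotim : ∀ x ∈ T.erase η, ends x ≠ ends ε := by
      intro x hx hxe
      exact hr (gr_adj hx (hxe.trans hcd) hne).reachable
    have hinj : Set.InjOn ends ↑(insert ε (T.erase η)) := by
      rw [Finset.coe_insert, Set.injOn_insert (by exact_mod_cast hεe)]
      refine ⟨hT.2.1.mono (by exact_mod_cast Finset.erase_subset η T), ?_⟩
      rintro ⟨x, hx, hxe⟩
      exact hnotim x (by exact_mod_cast hx) hxe
    obtain ⟨a, b, hab⟩ := sym2_cases (ends η)
    -- every vertex reaches a or b in the cut graph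
    have key : ∀ v : V, (Gr ends (T.erase η)).Reachable v a ∨ (Gr ends (T.erase η)).Reachable v b := by
      intro v
      have hva : (Gr ends T).Reachable v a := hT.2.2.isConnected v a
      have hdel : (Gr ends T) \ SimpleGraph.fromEdgeSet {s(a, b)} = Gr ends (T.erase η) := by
        rw [← hab]; exact gr_del hT.2.1 hη
      rcases reachable_cases (x := a) (y := b) hva with hl | ⟨h1, _⟩
      · exact Or.inl (by rwa [hdel] at hl)
      · rwa [hdel] at h1
    have hmono : Gr ends (T.erase η) ≤ Gr ends (insert ε (T.erase η)) :=
      gr_mono (Finset.subset_insert _ _)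
    have hadjcd : (Gr ends (insert ε (T.erase η))).Adj c d :=
      gr_adj (Finset.mem_insert_self ε _) hcd hne
    -- a and b are connected in the swapped graph
    have hab' : (Gr ends (insert ε (T.erase η))).Reachable a b := by
      rcases key c with hc | hc <;> rcases key d with hd2 | hd2
      · exact absurd (hc.trans hd2.symm) hr
      · exact ((hc.mono hmono).symm.trans hadjcd.reachable).trans (hd2.mono hmono)
      · exact ((hd2.mono hmono).symm.trans hadjcd.symm.reachable).trans (hc.mono hmono)
      · exact absurd (hc.trans hd2.symm) hr
    have hreachA : ∀ v : V, (Gr ends (insert ε (T.erase η))).Reachable v a := by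
      intro v
      rcases key v with h | h
      · exact h.mono hmono
      · exact (h.mono hmono).trans hab'.symm
    refine ⟨?_, hinj, ⟨?_, ?_⟩⟩
    · intro x hx
      rcases Finset.mem_insert.mp hx with rfl | hx
      · exact hd
      · exact hT.1 x (Finset.mem_of_mem_erase hx)
    · -- connected
      have : Nonempty V := hT.2.2.isConnected.nonempty
      exact SimpleGraph.Connected.mk (fun v w => (hreachA v).trans (hreachA w).symm)
    · -- acyclic
      rw [show (SimpleGraph.fromEdgeSet (↑((insert ε (T.erase η)).image ends) : Set (Sym2 V)))
            = Gr ends (insert ε (T.erase η)) from rfl]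
      rw [SimpleGraph.isAcyclic_iff_forall_edge_isBridge]
      intro e' he'
      simp only [Gr] at he'
      rw [SimpleGraph.edgeSet_fromEdgeSet, Set.mem_diff] at he'
      obtain ⟨hmem, hnd⟩ := he'
      obtain ⟨x, hxS, rfl⟩ := Finset.mem_image.mp (by exact_mod_cast hmem)
      obtain ⟨u, v, huv⟩ := sym2_cases (ends x)
      have huvne : u ≠ v := fun h => (huv ▸ hnd) (by rw [h]; exact Sym2.mk_isDiag_iff.mpr rfl)
      rw [huv, SimpleGraph.isBridge_iff]
      show ¬ (Gr ends (insert ε (T.erase η)) \ SimpleGraph.fromEdgeSet {s(u, v)}).Reachable u v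
      have hdel : Gr ends (insert ε (T.erase η)) \ SimpleGraph.fromEdgeSet {s(u, v)}
          = Gr ends ((insert ε (T.erase η)).erase x) := by
        rw [← huv]; exact gr_del hinj hxS
      rw [hdel]
      rcases Finset.mem_insert.mp hxS with rfl | hxT
      · -- the new edge ε : its removal gives the cut graph
        rw [Finset.erase_insert hεe]
        have : (u = c ∧ v = d) ∨ (u = d ∧ v = c) := Sym2.eq_iff.mp (huv.symm.trans hcd)
        rcases this with ⟨rfl, rfl⟩ | ⟨rfl, rfl⟩
        exacts [hr, fun h => hr h.symm]
      · -- an old tree edge x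
        have hxε : x ≠ ε := fun h => hεe (h ▸ hxT)
        have hxT' : x ∈ T := Finset.mem_of_mem_erase hxT
        rw [Finset.erase_insert_of_ne hxε.symm]
        intro r
        have hTx : ¬ (Gr ends (T.erase x)).Reachable u v := tree_cut hT hxT' huv
        have hdel2 : Gr ends (insert ε ((T.erase η).erase x)) \ SimpleGraph.fromEdgeSet {s(c, d)}
            = Gr ends ((T.erase η).erase x) := by
          rw [← hcd]
          have h1 : ε ∉ (T.erase η).erase x := fun h => hεe (Finset.mem_of_mem_erase h)
          have hss : (↑(insert ε ((T.erase η).erase x)) : Set EdgeT) ⊆ ↑(insert ε (T.erase η)) := by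
            intro z hz
            rcases Finset.mem_insert.mp (by exact_mod_cast hz) with rfl | hz'
            · exact_mod_cast Finset.mem_insert_self z _
            · exact_mod_cast Finset.mem_insert_of_mem (Finset.mem_of_mem_erase hz')
          have := gr_del (S := insert ε ((T.erase η).erase x)) (hinj.mono hss)
            (Finset.mem_insert_self ε _)
          rw [Finset.erase_insert h1] at this
          exact this
        have hsub : (T.erase η).erase x ⊆ T.erase x := by
          rw [Finset.erase_right_comm]; exact Finset.erase_subset _ _
        have hsubη : (T.erase η).erase x ⊆ T.erase η := Finset.erase_subset _ _
        rcases reachable_cases (x := c) (y := d) r with hl | ⟨h1, h2⟩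
        · rw [hdel2] at hl
          exact hTx (hl.mono (gr_mono hsub))
        · rw [hdel2] at h1 h2
          have hadjuv : (Gr ends (T.erase η)).Adj u v := gr_adj hxT huv huvne
          rcases h1 with h1 | h1 <;> rcases h2 with h2 | h2
          · exact hTx ((h1.trans h2.symm).mono (gr_mono hsub))
          · exact hr (((h1.mono (gr_mono hsubη)).symm.trans hadjuv.reachable).trans
              (h2.mono (gr_mono hsubη)))
          · exact hr (((h2.mono (gr_mono hsubη)).symm.trans hadjuv.symm.reachable).trans
              (h1.mono (gr_mono hsubη)))
          · exact hTx ((h1.trans h2.symm).mono (gr_mono hsub))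


/-- Characterization of `InFundCycle` in terms of reachability in the cut graph. -/
lemma infund_iff (hT : IsSpanningTree ends T) (hη : η ∈ T) (hε : ε ∉ T)
    (hd : ¬ (ends ε).IsDiag) {c d : V} (hcd : ends ε = s(c, d)) :
    InFundCycle ends T ε η ↔ ¬ (Gr ends (T.erase η)).Reachable c d := by
  unfold InFundCycle
  rw [swap_iff hT hη hε hd hcd]
  have : η ≠ ε := fun h => hε (h ▸ hη)
  tauto

lemma nondiag_of_cyc (hη : η ∈ T) (hε : ε ∉ T) (h : InFundCycle ends T ε η) :
    ¬ (ends ε).IsDiag := by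
  rcases h with rfl | ⟨-, hS⟩
  · exact absurd hη hε
  · exact hS.1 ε (Finset.mem_insert_self ε _)

/-- Forward transfer: membership in a fundamental cycle is preserved by a disjoint swap. -/
lemma fwd (hT : IsSpanningTree ends T) (hη' : η' ∈ T) (hε' : ε' ∉ T)
    (hT' : IsSpanningTree ends (insert ε' (T.erase η'))) (hη : η ∈ T) (hne : η ≠ η') {c d : V}
    (h1 : ¬ (Gr ends (T.erase η)).Reachable c d) (h2 : (Gr ends (T.erase η')).Reachable c d) :
    ¬ (Gr ends ((insert ε' (T.erase η')).erase η)).Reachable c d := by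
  have hηε' : η ≠ ε' := fun h => hε' (h ▸ hη)
  have hε'e : ε' ∉ T.erase η' := fun h => hε' (Finset.mem_of_mem_erase h)
  obtain ⟨c', d', hcd'⟩ := sym2_cases (ends ε')
  -- ε' crosses the η'-cut
  have hx : ¬ (Gr ends (T.erase η')).Reachable c' d' := by
    have := tree_cut hT' (Finset.mem_insert_self ε' _) hcd'
    rwa [Finset.erase_insert hε'e] at this
  have hS2 : (insert ε' (T.erase η')).erase η = insert ε' ((T.erase η').erase η) :=
    Finset.erase_insert_of_ne hηε'.symm
  intro r
  rw [hS2] at r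
  have hε'e2 : ε' ∉ (T.erase η').erase η := fun h => hε' (Finset.mem_of_mem_erase (Finset.mem_of_mem_erase h))
  have hdel : Gr ends (insert ε' ((T.erase η').erase η)) \ SimpleGraph.fromEdgeSet {s(c', d')}
      = Gr ends ((T.erase η').erase η) := by
    rw [← hcd']
    have hss : (↑(insert ε' ((T.erase η').erase η)) : Set EdgeT) ⊆ ↑(insert ε' (T.erase η')) := by
      intro z hz
      rcases Finset.mem_insert.mp (by exact_mod_cast hz) with rfl | hz'
      · exact_mod_cast Finset.mem_insert_self z _
      · exact_mod_cast Finset.mem_insert_of_mem (Finset.mem_of_mem_erase hz')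
    have := gr_del (S := insert ε' ((T.erase η').erase η)) (hT'.2.1.mono hss)
      (Finset.mem_insert_self ε' _)
    rwa [Finset.erase_insert hε'e2] at this
  have hsub : (T.erase η').erase η ⊆ T.erase η := by
    rw [Finset.erase_right_comm]; exact Finset.erase_subset _ _
  have hsubη' : (T.erase η').erase η ⊆ T.erase η' := Finset.erase_subset _ _
  rcases reachable_cases (x := c') (y := d') r with hl | ⟨ha1, ha2⟩
  · rw [hdel] at hl
    exact h1 (hl.mono (gr_mono hsub))
  · rw [hdel] at ha1 ha2
    rcases ha1 with ha1 | ha1 <;> rcases ha2 with ha2 | ha2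
    · exact h1 ((ha1.trans ha2.symm).mono (gr_mono hsub))
    · exact hx (((ha1.mono (gr_mono hsubη')).symm.trans h2).trans (ha2.mono (gr_mono hsubη')))
    · exact hx (((ha2.mono (gr_mono hsubη')).symm.trans h2.symm).trans
        (ha1.mono (gr_mono hsubη')))
    · exact h1 ((ha1.trans ha2.symm).mono (gr_mono hsub))

/-- Backward transfer: reachability in both single-cut graphs gives
reachability in the double-cut graph. -/
lemma bwd (hT : IsSpanningTree ends T) (hη : η ∈ T) (hη' : η' ∈ T) (hne : η ≠ η') {c d : V}
    (h1 : (Gr ends (T.erase η)).Reachable c d) (h2 : (Gr ends (T.erase η')).Reachable c d) :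
    (Gr ends ((T.erase η).erase η')).Reachable c d := by
  obtain ⟨a, b, hab⟩ := sym2_cases (ends η)
  have hcut : ¬ (Gr ends (T.erase η)).Reachable a b := tree_cut hT hη hab
  have hdel : Gr ends (T.erase η') \ SimpleGraph.fromEdgeSet {s(a, b)}
      = Gr ends ((T.erase η).erase η') := by
    rw [← hab]
    have hmem : η ∈ T.erase η' := Finset.mem_erase.mpr ⟨hne, hη⟩
    have := gr_del (S := T.erase η') (hT.2.1.mono (by exact_mod_cast Finset.erase_subset _ _))
      hmem
    rwa [Finset.erase_right_comm] at this
  have hsub : (T.erase η).erase η' ⊆ T.erase η := Finset.erase_subset _ _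
  rcases reachable_cases (x := a) (y := b) h2 with hl | ⟨hc2, hd2⟩
  · rwa [hdel] at hl
  · rw [hdel] at hc2 hd2
    rcases hc2 with hc2 | hc2 <;> rcases hd2 with hd2 | hd2
    · exact hc2.trans hd2.symm
    · exact absurd (((hc2.mono (gr_mono hsub)).symm.trans h1).trans
        (hd2.mono (gr_mono hsub))) hcut
    · exact absurd (((hd2.mono (gr_mono hsub)).symm.trans h1.symm).trans
        (hc2.mono (gr_mono hsub))) hcut
    · exact hc2.trans hd2.symm


lemma finset_step {η ε : ℕ → EdgeT} {t : ℕ}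
    (hηT : ∀ i < t + 1, η i ∈ T) (hεT : ∀ i < t + 1, ε i ∉ T) :
    ((insert (ε t) (T.erase (η t))) \ (Finset.range t).image η) ∪ (Finset.range t).image ε
      = (T \ (Finset.range (t + 1)).image η) ∪ (Finset.range (t + 1)).image ε := by
  ext x
  simp only [Finset.mem_union, Finset.mem_sdiff, Finset.mem_insert, Finset.mem_erase,
    Finset.mem_image, Finset.mem_range]
  constructor
  · rintro (⟨(rfl | ⟨hxη, hxT⟩), hnx⟩ | ⟨i, hi, rfl⟩)
    · exact Or.inr ⟨t, Nat.lt_succ_self t, rfl⟩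
    · refine Or.inl ⟨hxT, ?_⟩
      rintro ⟨i, hi, hix⟩
      rcases Nat.lt_succ_iff_lt_or_eq.mp hi with hi' | rfl
      · exact hnx ⟨i, hi', hix⟩
      · exact hxη hix.symm
    · exact Or.inr ⟨i, Nat.lt_succ_of_lt hi, rfl⟩
  · rintro (⟨hxT, hnx⟩ | ⟨i, hi, rfl⟩)
    · refine Or.inl ⟨Or.inr ⟨fun h => hnx ⟨t, Nat.lt_succ_self t, h.symm⟩, hxT⟩, ?_⟩
      rintro ⟨i, hi, rfl⟩
      exact hnx ⟨i, Nat.lt_succ_of_lt hi, rfl⟩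
    · rcases Nat.lt_succ_iff_lt_or_eq.mp hi with hi' | rfl
      · exact Or.inr ⟨i, hi', rfl⟩
      · refine Or.inl ⟨Or.inl rfl, ?_⟩
        rintro ⟨j, hj, hjx⟩
        exact hεT i (Nat.lt_succ_self _) (hjx ▸ hηT j (Nat.lt_succ_of_lt hj))

lemma aux (ends : EdgeT → Sym2 V) (η ε : ℕ → EdgeT) :
    ∀ (t : ℕ) (T : Finset EdgeT), IsSpanningTree ends T →
    (∀ i < t, ∀ j < t, η i = η j → i = j) →
    (∀ i < t, ∀ j < t, ε i = ε j → i = j) →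
    (∀ i < t, η i ∈ T) → (∀ i < t, ε i ∉ T) →
    (∀ i < t, InFundCycle ends T (ε i) (η i)) →
    (∀ i < t, ∀ j < i, ¬ InFundCycle ends T (ε j) (η i)) →
    IsSpanningTree ends ((T \ (Finset.range t).image η) ∪ (Finset.range t).image ε) := by
  intro t
  induction t with
  | zero => intro T hT _ _ _ _ _ _; simpa using hT
  | succ t ih =>
    intro T hT hηinj hεinj hηT hεT hcyc hncyc
    set T' : Finset EdgeT := insert (ε t) (T.erase (η t)) with hT'def
    have hηt : η t ∈ T := hηT t (Nat.lt_succ_self t)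
    have hεt : ε t ∉ T := hεT t (Nat.lt_succ_self t)
    have hT' : IsSpanningTree ends T' := by
      rcases hcyc t (Nat.lt_succ_self t) with h | ⟨-, h⟩
      · exact absurd (h ▸ hηt) hεt
      · exact h
    have hηne : ∀ i < t, η i ≠ η t := fun i hi h =>
      Nat.lt_irrefl t ((hηinj i (Nat.lt_succ_of_lt hi) t (Nat.lt_succ_self t) h) ▸ hi)
    have hηT' : ∀ i < t, η i ∈ T' := fun i hi =>
      Finset.mem_insert_of_mem (Finset.mem_erase.mpr ⟨hηne i hi, hηT i (Nat.lt_succ_of_lt hi)⟩)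
    have hεT' : ∀ i < t, ε i ∉ T' := by
      intro i hi h
      rcases Finset.mem_insert.mp h with h | h
      · exact Nat.lt_irrefl t
          ((hεinj i (Nat.lt_succ_of_lt hi) t (Nat.lt_succ_self t) h) ▸ hi)
      · exact hεT i (Nat.lt_succ_of_lt hi) (Finset.mem_of_mem_erase h)
    have hcyc' : ∀ i < t, InFundCycle ends T' (ε i) (η i) := by
      intro i hi
      obtain ⟨c, d, hcd⟩ := sym2_cases (ends (ε i))
      have nd : ¬ (ends (ε i)).IsDiag :=
        nondiag_of_cyc (hηT i (Nat.lt_succ_of_lt hi)) (hεT i (Nat.lt_succ_of_lt hi))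
          (hcyc i (Nat.lt_succ_of_lt hi))
      have h1 : ¬ (Gr ends (T.erase (η i))).Reachable c d :=
        (infund_iff hT (hηT i (Nat.lt_succ_of_lt hi)) (hεT i (Nat.lt_succ_of_lt hi)) nd hcd).mp
          (hcyc i (Nat.lt_succ_of_lt hi))
      have h2 : (Gr ends (T.erase (η t))).Reachable c d := by
        by_contra h2
        exact hncyc t (Nat.lt_succ_self t) i hi
          ((infund_iff hT hηt (hεT i (Nat.lt_succ_of_lt hi)) nd hcd).mpr h2)
      exact (infund_iff hT' (hηT' i hi) (hεT' i hi) nd hcd).mpr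
        (fwd hT hηt hεt hT' (hηT i (Nat.lt_succ_of_lt hi)) (hηne i hi) h1 h2)
    have hncyc' : ∀ i < t, ∀ j < i, ¬ InFundCycle ends T' (ε j) (η i) := by
      intro i hi j hj hcon
      obtain ⟨c, d, hcd⟩ := sym2_cases (ends (ε j))
      have hjt : j < t := hj.trans hi
      have nd : ¬ (ends (ε j)).IsDiag :=
        nondiag_of_cyc (hηT j (Nat.lt_succ_of_lt hjt)) (hεT j (Nat.lt_succ_of_lt hjt))
          (hcyc j (Nat.lt_succ_of_lt hjt))
      have hnr : ¬ (Gr ends (T'.erase (η i))).Reachable c d :=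
        (infund_iff hT' (hηT' i hi) (hεT' j hjt) nd hcd).mp hcon
      have r1 : (Gr ends (T.erase (η i))).Reachable c d := by
        by_contra h
        exact hncyc i (Nat.lt_succ_of_lt hi) j hj
          ((infund_iff hT (hηT i (Nat.lt_succ_of_lt hi)) (hεT j (Nat.lt_succ_of_lt hjt)) nd
            hcd).mpr h)
      have r2 : (Gr ends (T.erase (η t))).Reachable c d := by
        by_contra h
        exact hncyc t (Nat.lt_succ_self t) j hjt
          ((infund_iff hT hηt (hεT j (Nat.lt_succ_of_lt hjt)) nd hcd).mpr h)
      have rb : (Gr ends ((T.erase (η i)).erase (η t))).Reachable c d :=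
        bwd hT (hηT i (Nat.lt_succ_of_lt hi)) hηt (hηne i hi).symm.symm r1 r2
      have hsub : (T.erase (η i)).erase (η t) ⊆ T'.erase (η i) := by
        intro z hz
        have h1 : z ∈ (T.erase (η t)).erase (η i) := by rwa [Finset.erase_right_comm] at hz
        have : z ∈ T'.erase (η i) := by
          rw [hT'def, Finset.erase_insert_of_ne]
          · exact Finset.mem_insert_of_mem h1
          · intro h
            exact hεt (h ▸ hηT i (Nat.lt_succ_of_lt hi))
        exact this
      exact hnr (rb.mono (gr_mono hsub))
    have := ih T' hT'
      (fun i hi j hj h => hηinj i (Nat.lt_succ_of_lt hi) j (Nat.lt_succ_of_lt hj) h)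
      (fun i hi j hj h => hεinj i (Nat.lt_succ_of_lt hi) j (Nat.lt_succ_of_lt hj) h)
      hηT' hεT' hcyc' hncyc'
    rwa [finset_step hηT hεT] at this

end SwapAux


theorem simultaneous_swap_in_trees (ends : EdgeT → Sym2 V)
    (hconn : (SimpleGraph.fromEdgeSet (Set.range ends)).Connected)
    (T : Finset EdgeT) (hT : IsSpanningTree ends T) (t : ℕ) (η ε : ℕ → EdgeT)
    (hηinj : ∀ i < t, ∀ j < t, η i = η j → i = j)
    (hεinj : ∀ i < t, ∀ j < t, ε i = ε j → i = j)
    (hηT : ∀ i < t, η i ∈ T) (hεT : ∀ i < t, ε i ∉ T)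
    (hcyc : ∀ i < t, InFundCycle ends T (ε i) (η i))
    (hncyc : ∀ i < t, ∀ j < i, ¬ InFundCycle ends T (ε j) (η i)) :
    IsSpanningTree ends ((T \ (Finset.range t).image η) ∪ (Finset.range t).image ε) :=
  SwapAux.aux ends η ε t T hT hηinj hεinj hηT hεT hcyc hncyc
end

section
/- Let T be a spanning tree of a graph G and let e₀v₀,…,e_{t-1}v_{t-1} ∈ T and e₁u₁,…,e_tu_t ∉ T be edges such that eᵢvᵢ ∈ C(T, e_{i+1}u_{i+1}) for i = 0,…,t−1. Then there exist indices 0 = i₀ < i₁ < … < i_s = t such that T − {e_{i₀}v_{i₀},…,e_{i_{s-1}}v_{i_{s-1}}} + {e_{i₁}u_{i₁},…,e_{i_s}u_{i_s}} is a spanning tree. -/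
set_option linter.unusedSectionVars false
open SimpleGraph


variable {V EdgeT : Type*} [Fintype V] [Fintype EdgeT] [DecidableEq V] [DecidableEq EdgeT]

section AuxLemmas

lemma reach_sup_edge {G : SimpleGraph V} {x y u v : V}
    (h : (G ⊔ fromEdgeSet {s(x,y)}).Reachable u v) :
    G.Reachable u v ∨ (G.Reachable u x ∧ G.Reachable y v) ∨
      (G.Reachable u y ∧ G.Reachable x v) := by
  obtain ⟨w⟩ := h
  induction w with
  | nil => exact Or.inl (Reachable.refl _)
  | @cons u b v h' p ih =>
    rcases (sup_adj _ _ _ _).mp h' with hG | hE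
    · rcases ih with h1 | ⟨h1, h2⟩ | ⟨h1, h2⟩
      · exact Or.inl (hG.reachable.trans h1)
      · exact Or.inr (Or.inl ⟨hG.reachable.trans h1, h2⟩)
      · exact Or.inr (Or.inr ⟨hG.reachable.trans h1, h2⟩)
    · rw [fromEdgeSet_adj, Set.mem_singleton_iff] at hE
      rcases Sym2.eq_iff.mp hE.1 with ⟨rfl, rfl⟩ | ⟨rfl, rfl⟩
      · rcases ih with h1 | ⟨h1, h2⟩ | ⟨h1, h2⟩
        · exact Or.inr (Or.inl ⟨Reachable.refl _, h1⟩)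
        · exact Or.inr (Or.inr ⟨h1.symm, h1.symm.trans h2⟩)
        · exact Or.inl h2
      · rcases ih with h1 | ⟨h1, h2⟩ | ⟨h1, h2⟩
        · exact Or.inr (Or.inr ⟨Reachable.refl _, h1⟩)
        · exact Or.inl h2
        · exact Or.inr (Or.inl ⟨h1.symm, h1.symm.trans h2⟩)

lemma not_reachable_of_tree_swap {G : SimpleGraph V} {p q x y : V}
    (hxy : x ≠ y) (hne : ¬ (G \ fromEdgeSet {s(p,q)}).Adj x y)
    (ht : ((G \ fromEdgeSet {s(p,q)}) ⊔ fromEdgeSet {s(x,y)}).IsTree) :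
    ¬ (G \ fromEdgeSet {s(p,q)}).Reachable x y := by
  set K := G \ fromEdgeSet {s(p,q)} with hK
  have hadj : (K ⊔ fromEdgeSet {s(x,y)}).Adj x y := by
    rw [sup_adj, fromEdgeSet_adj]; exact Or.inr ⟨rfl, hxy⟩
  have hb : ¬ ((K ⊔ fromEdgeSet {s(x,y)}) \ fromEdgeSet {s(x,y)}).Reachable x y :=
    isBridge_iff.mp (isAcyclic_iff_forall_adj_isBridge.mp ht.IsAcyclic hadj)
  have hEq : (K ⊔ fromEdgeSet {s(x,y)}) \ fromEdgeSet {s(x,y)} = K := by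
    ext u v
    simp only [sdiff_adj, sup_adj, fromEdgeSet_adj, Set.mem_singleton_iff]
    constructor
    · rintro ⟨h | he, h2⟩
      · exact h
      · exact absurd he h2
    · intro h
      refine ⟨Or.inl h, ?_⟩
      rintro ⟨he, -⟩
      apply hne
      rcases Sym2.eq_iff.mp he with ⟨rfl, rfl⟩ | ⟨rfl, rfl⟩
      · exact h
      · exact h.symm
  rw [hEq] at hb
  exact hb

lemma tree_edge_not_reachable_delete {G : SimpleGraph V} (hG : G.IsTree) {u w : V}
    (h : G.Adj u w) : ¬ (G \ fromEdgeSet {s(u,w)}).Reachable u w :=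
  ((isAcyclic_iff_forall_adj_isBridge.mp hG.IsAcyclic) h)

lemma tree_swap_of_not_reachable {G : SimpleGraph V} (hG : G.IsTree) {p q x y : V}
    (ha : G.Adj p q) (hxy : x ≠ y)
    (hr : ¬ (G \ fromEdgeSet {s(p,q)}).Reachable x y) :
    ((G \ fromEdgeSet {s(p,q)}) ⊔ fromEdgeSet {s(x,y)}).IsTree := by
  set K := G \ fromEdgeSet {s(p,q)} with hK
  have hKle : K ≤ G := sdiff_le
  have hGeq : G = K ⊔ fromEdgeSet {s(p,q)} := by
    ext u v
    simp only [hK, sdiff_adj, sup_adj, fromEdgeSet_adj, Set.mem_singleton_iff]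
    constructor
    · intro h
      by_cases h2 : s(u,v) = s(p,q) ∧ u ≠ v
      · exact Or.inr h2
      · exact Or.inl ⟨h, h2⟩
    · rintro (⟨h, -⟩ | ⟨he, -⟩)
      · exact h
      · rcases Sym2.eq_iff.mp he with ⟨rfl, rfl⟩ | ⟨rfl, rfl⟩
        · exact ha
        · exact ha.symm
  have claim1 : ∀ v : V, K.Reachable v x ∨ (K.Reachable v p ∧ K.Reachable q x) ∨
      (K.Reachable v q ∧ K.Reachable p x) := by
    intro v
    have := hG.isConnected.preconnected v x
    rw [hGeq] at this
    exact reach_sup_edge this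
  have hadjE : ((K ⊔ fromEdgeSet {s(x,y)})).Adj x y := by
    rw [sup_adj, fromEdgeSet_adj]; exact Or.inr ⟨rfl, hxy⟩
  have hle : K ≤ K ⊔ fromEdgeSet {s(x,y)} := le_sup_left
  -- every vertex reaches x in the new graph
  have claim2 : ∀ v : V, (K ⊔ fromEdgeSet {s(x,y)}).Reachable v x := by
    intro v
    rcases claim1 v with h1 | ⟨h1, h2⟩ | ⟨h1, h2⟩
    · exact h1.mono hle
    · rcases claim1 y with hy | ⟨hy1, hy2⟩ | ⟨hy1, hy2⟩
      · exact absurd hy.symm hr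
      · exact ((h1.mono hle).trans ((hy1.mono hle).symm)).trans hadjE.symm.reachable
      · exact (h1.mono hle).trans (hy2.mono hle)
    · rcases claim1 y with hy | ⟨hy1, hy2⟩ | ⟨hy1, hy2⟩
      · exact absurd hy.symm hr
      · exact (h1.mono hle).trans (hy2.mono hle)
      · exact ((h1.mono hle).trans ((hy1.mono hle).symm)).trans hadjE.symm.reachable
  constructor
  · have hne : Nonempty V := hG.isConnected.nonempty
    exact { preconnected := fun v w => (claim2 v).trans (claim2 w).symm, nonempty := hne }
  · -- acyclic
    rw [isAcyclic_iff_forall_adj_isBridge]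
    intro u w hadj
    rw [isBridge_iff]
    show ¬ ((K ⊔ fromEdgeSet {s(x,y)}) \ fromEdgeSet {s(u,w)}).Reachable u w
    have hKxy : ¬ K.Adj x y := fun h => hr h.reachable
    rcases (sup_adj _ _ _ _).mp hadj with hKuw | hEuw
    · -- tree edge of K
      have hbridge : ¬ (G \ fromEdgeSet {s(u,w)}).Reachable u w :=
        tree_edge_not_reachable_delete hG (hKle hKuw)
      have hEq2 : (K ⊔ fromEdgeSet {s(x,y)}) \ fromEdgeSet {s(u,w)} =
          (K \ fromEdgeSet {s(u,w)}) ⊔ fromEdgeSet {s(x,y)} := by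
        ext c d
        simp only [sdiff_adj, sup_adj, fromEdgeSet_adj, Set.mem_singleton_iff]
        constructor
        · rintro ⟨hc | hc, h2⟩
          · exact Or.inl ⟨hc, h2⟩
          · exact Or.inr hc
        · rintro (⟨hc, h2⟩ | hc)
          · exact ⟨Or.inl hc, h2⟩
          · refine ⟨Or.inr hc, ?_⟩
            rintro ⟨he, -⟩
            apply hKxy
            have : s(u,w) = s(x,y) := he.symm.trans hc.1
            rcases Sym2.eq_iff.mp this with ⟨h3, h4⟩ | ⟨h3, h4⟩
            · exact h3 ▸ h4 ▸ hKuw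
            · exact (h3 ▸ h4 ▸ hKuw : K.Adj y x).symm
        done
      rw [hEq2]
      intro hreach
      rcases reach_sup_edge hreach with h1 | ⟨h1, h2⟩ | ⟨h1, h2⟩
      · exact hbridge (h1.mono (sdiff_le_sdiff_right hKle))
      · exact hr (((h1.mono sdiff_le).symm.trans hKuw.reachable).trans (h2.mono sdiff_le).symm)
      · exact hr (((h2.mono sdiff_le).trans hKuw.symm.reachable).trans (h1.mono sdiff_le))
    · -- the new edge
      rw [fromEdgeSet_adj, Set.mem_singleton_iff] at hEuw
      have hEq3 : (K ⊔ fromEdgeSet {s(x,y)}) \ fromEdgeSet {s(u,w)} ≤ K := by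
        intro c d hc
        rcases hc with ⟨hc | hc, h2⟩
        · exact hc
        · exact absurd (hEuw.1 ▸ hc : (fromEdgeSet {s(u,w)}).Adj c d) h2
      intro hreach
      rcases Sym2.eq_iff.mp hEuw.1 with ⟨rfl, rfl⟩ | ⟨rfl, rfl⟩
      · exact hr (hreach.mono hEq3)
      · exact hr (hreach.mono hEq3).symm

variable {EdgeT : Type*} [Fintype EdgeT] [DecidableEq EdgeT]

lemma swap_iff {ends : EdgeT → Sym2 V} {T : Finset EdgeT} (hT : IsSpanningTree ends T)
    {a b : EdgeT} (ha : a ∈ T) (hb : b ∉ T) (hbd : ¬ (ends b).IsDiag)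
    {x y p q : V} (hex : ends b = s(x,y)) (hea : ends a = s(p,q)) :
    IsSpanningTree ends (insert b (T.erase a)) ↔
      ¬ (fromEdgeSet (↑(T.image ends) : Set (Sym2 V)) \ fromEdgeSet {s(p,q)}).Reachable x y := by
  obtain ⟨hnd, hinj, htree⟩ := hT
  have hxy : x ≠ y := by rw [hex] at hbd; simpa using hbd
  have hpq : p ≠ q := by have := hnd a ha; rw [hea] at this; simpa using this
  have hGadj : (fromEdgeSet (↑(T.image ends) : Set (Sym2 V))).Adj p q := by
    rw [fromEdgeSet_adj]
    exact ⟨by rw [← hea, Finset.coe_image]; exact Set.mem_image_of_mem ends ha, hpq⟩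
  have himg : (ends '' (↑T \ {a}) : Set (Sym2 V)) = (ends '' ↑T) \ {ends a} := by
    rw [hinj.image_diff_subset (by simpa using ha), Set.image_singleton]
  have hGeq : fromEdgeSet (↑((insert b (T.erase a)).image ends) : Set (Sym2 V)) =
      (fromEdgeSet (↑(T.image ends) : Set (Sym2 V)) \ fromEdgeSet {s(p,q)}) ⊔
        fromEdgeSet {s(x,y)} := by
    rw [Finset.coe_image, Finset.coe_insert, Set.image_insert_eq, Finset.coe_erase, himg,
      Set.insert_eq, Set.union_comm, fromEdgeSet_union, ← hea, ← hex, Finset.coe_image,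
      fromEdgeSet_sdiff]
  -- the graph `G(T) \ a` is not adjacent at x y, given no tree edge other than `a`
  -- has the same ends as `b`
  have key_adj : (∀ c ∈ T.erase a, ends c ≠ ends b) →
      ¬ (fromEdgeSet (↑(T.image ends) : Set (Sym2 V)) \ fromEdgeSet {s(p,q)}).Adj x y := by
    intro hc hadj
    rw [sdiff_adj, fromEdgeSet_adj, fromEdgeSet_adj] at hadj
    obtain ⟨⟨h1, -⟩, h2⟩ := hadj
    rw [Finset.coe_image] at h1
    obtain ⟨c, hcT, hce⟩ := h1
    have hca : c ≠ a := by
      rintro rfl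
      exact h2 ⟨Set.mem_singleton_iff.mpr (by rw [← hce, hea]), hxy⟩
    exact hc c (Finset.mem_erase.mpr ⟨hca, hcT⟩) (by rw [hce, hex])
  constructor
  · rintro ⟨-, hinj', htree'⟩
    refine not_reachable_of_tree_swap hxy (key_adj ?_) (hGeq ▸ htree')
    intro c hc hce
    have hbc : b ≠ c := fun h => hb (h ▸ (Finset.mem_erase.mp hc).2)
    exact hbc (hinj' (by simp) (by
      simp only [Finset.coe_insert, Set.mem_insert_iff, Finset.mem_coe]
      exact Or.inr hc) hce.symm)
  · intro hr
    have hbne : ∀ c ∈ T.erase a, ends c ≠ ends b := by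
      intro c hc hce
      apply hr
      apply Adj.reachable
      rw [sdiff_adj, fromEdgeSet_adj, fromEdgeSet_adj]
      refine ⟨⟨?_, hxy⟩, ?_⟩
      · rw [Finset.coe_image, ← hex, ← hce]
        exact Set.mem_image_of_mem ends (by simpa using (Finset.mem_erase.mp hc).2)
      · rintro ⟨h1, -⟩
        have hca : c ≠ a := (Finset.mem_erase.mp hc).1
        exact hca (hinj (Finset.mem_erase.mp hc).2 ha (by rw [hce, hex, h1, ← hea]))
    refine ⟨?_, ?_, ?_⟩
    · intro ε hε
      rcases Finset.mem_insert.mp hε with rfl | hε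
      · exact hbd
      · exact hnd ε (Finset.mem_of_mem_erase hε)
    · rw [Finset.coe_insert]
      rw [Set.injOn_insert (fun h : b ∈ (↑(T.erase a) : Set EdgeT) =>
        hb (Finset.mem_of_mem_erase (Finset.mem_coe.mp h)))]
      refine ⟨hinj.mono (by simp [Finset.coe_erase, Set.diff_subset]), ?_⟩
      rintro ⟨c, hc, hce⟩
      rw [Finset.mem_coe] at hc
      exact hbne c hc hce
    · rw [hGeq]
      exact tree_swap_of_not_reachable htree hGadj hxy hr

lemma key_exchange {ends : EdgeT → Sym2 V} {T : Finset EdgeT} (hT : IsSpanningTree ends T)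
    {a0 ai bk bi : EdgeT}
    (ha0 : a0 ∈ T) (hai : ai ∈ T) (hne : ai ≠ a0)
    (hbk : bk ∉ T) (hbi : bi ∉ T) (hbne : bi ≠ bk)
    (h1 : IsSpanningTree ends (insert bi (T.erase ai)))
    (h2 : IsSpanningTree ends (insert bk (T.erase a0)))
    (h3 : ¬ IsSpanningTree ends (insert bi (T.erase a0))) :
    IsSpanningTree ends (insert bi ((insert bk (T.erase a0)).erase ai)) := by
  obtain ⟨⟨p, q⟩, heai⟩ := Quot.exists_rep (ends ai)
  obtain ⟨⟨p0, q0⟩, hea0⟩ := Quot.exists_rep (ends a0)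
  obtain ⟨⟨xi, yi⟩, hebi⟩ := Quot.exists_rep (ends bi)
  obtain ⟨⟨xk, yk⟩, hebk⟩ := Quot.exists_rep (ends bk)
  replace heai : ends ai = s(p, q) := heai.symm
  replace hea0 : ends a0 = s(p0, q0) := hea0.symm
  replace hebi : ends bi = s(xi, yi) := hebi.symm
  replace hebk : ends bk = s(xk, yk) := hebk.symm
  have hbdi : ¬ (ends bi).IsDiag := h1.1 bi (Finset.mem_insert_self _ _)
  have hbdk : ¬ (ends bk).IsDiag := h2.1 bk (Finset.mem_insert_self _ _)
  have hinj := hT.2.1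
  have hpq : p ≠ q := by have := hT.1 ai hai; rw [heai] at this; simpa using this
  set E : Set (Sym2 V) := (↑(T.image ends) : Set (Sym2 V)) with hE
  have hEimg : E = ends '' ↑T := Finset.coe_image
  have haiE : ends ai ∈ E := by
    rw [hEimg]; exact Set.mem_image_of_mem ends (Finset.mem_coe.mpr hai)
  have hne_a : ends ai ≠ ends a0 :=
    fun h => hne (hinj (Finset.mem_coe.mpr hai) (Finset.mem_coe.mpr ha0) h)
  have hai2 : ai ∈ insert bk (T.erase a0) :=
    Finset.mem_insert_of_mem (Finset.mem_erase.mpr ⟨hne, hai⟩)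
  have hbi2 : bi ∉ insert bk (T.erase a0) := by
    rw [Finset.mem_insert]
    rintro (rfl | h)
    · exact hbne rfl
    · exact hbi (Finset.mem_of_mem_erase h)
  have hbk_ai : ends bk ≠ ends ai := by
    intro h
    have : bk = ai := h2.2.1 (by simp) (by
      simp only [Finset.coe_insert, Set.mem_insert_iff, Finset.mem_coe]
      exact Or.inr (Finset.mem_erase.mpr ⟨hne, hai⟩)) h
    exact hbk (this ▸ hai)
  have F1 : ¬ (fromEdgeSet E \ fromEdgeSet {s(p, q)}).Reachable xi yi :=
    (swap_iff hT hai hbi hbdi hebi heai).mp h1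
  have F2 : ¬ (fromEdgeSet E \ fromEdgeSet {s(p0, q0)}).Reachable xk yk :=
    (swap_iff hT ha0 hbk hbdk hebk hea0).mp h2
  have F3 : (fromEdgeSet E \ fromEdgeSet {s(p0, q0)}).Reachable xi yi := by
    by_contra hcon
    exact h3 ((swap_iff hT ha0 hbi hbdi hebi hea0).mpr hcon)
  set K : SimpleGraph V := fromEdgeSet ((E \ {ends a0}) \ {ends ai}) with hKdef
  have haiE0 : ends ai ∈ E \ {ends a0} := ⟨haiE, by simpa using hne_a⟩
  have hsplit : fromEdgeSet E \ fromEdgeSet {s(p0, q0)} = K ⊔ fromEdgeSet {s(p, q)} := by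
    rw [hKdef, ← heai, ← hea0, ← fromEdgeSet_sdiff, ← fromEdgeSet_union]
    congr 1
    rw [Set.diff_union_of_subset (Set.singleton_subset_iff.mpr haiE0)]
  have hKle1 : K ≤ fromEdgeSet E \ fromEdgeSet {s(p, q)} := by
    rw [← heai, ← fromEdgeSet_sdiff]
    exact fromEdgeSet_mono (Set.diff_subset_diff_left Set.diff_subset)
  have hKle0 : K ≤ fromEdgeSet E \ fromEdgeSet {s(p0, q0)} := by
    rw [← hea0, ← fromEdgeSet_sdiff]
    exact fromEdgeSet_mono Set.diff_subset
  have hadjpq : (fromEdgeSet E \ fromEdgeSet {s(p0, q0)}).Adj p q := by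
    rw [← hea0, ← fromEdgeSet_sdiff, fromEdgeSet_adj]
    exact ⟨⟨heai ▸ haiE, by simpa [← heai] using hne_a⟩, hpq⟩
  -- compute the graph of the new tree minus `ai`
  have himg2 : (↑((insert bk (T.erase a0)).image ends) : Set (Sym2 V)) =
      insert (ends bk) (E \ {ends a0}) := by
    rw [Finset.coe_image, Finset.coe_insert, Set.image_insert_eq, Finset.coe_erase, hEimg,
      hinj.image_diff_subset (by simpa using ha0), Set.image_singleton]
  have hG' : fromEdgeSet (↑((insert bk (T.erase a0)).image ends) : Set (Sym2 V)) \
      fromEdgeSet {s(p, q)} = K ⊔ fromEdgeSet {s(xk, yk)} := by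
    rw [himg2, ← heai, ← hebk, ← fromEdgeSet_sdiff,
      Set.insert_diff_of_notMem _ (by simpa using hbk_ai),
      Set.insert_eq, Set.union_comm, fromEdgeSet_union, hKdef]
  refine (swap_iff h2 hai2 hbi2 hbdi hebi heai).mpr ?_
  rw [hG']
  intro R
  have F3' := hsplit ▸ F3
  rcases reach_sup_edge R with h | ⟨c1, c2⟩ | ⟨c1, c2⟩
  · exact F1 (h.mono hKle1)
  · rcases reach_sup_edge F3' with h' | ⟨m, n⟩ | ⟨m, n⟩
    · exact F1 (h'.mono hKle1)
    · exact F2 ((((c1.symm.trans m).mono hKle0).trans hadjpq.reachable).trans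
        ((n.trans c2.symm).mono hKle0))
    · exact F2 ((((c1.symm.trans m).mono hKle0).trans hadjpq.symm.reachable).trans
        ((n.trans c2.symm).mono hKle0))
  · rcases reach_sup_edge F3' with h' | ⟨m, n⟩ | ⟨m, n⟩
    · exact F1 (h'.mono hKle1)
    · exact F2 ((((c2.trans n.symm).mono hKle0).trans hadjpq.symm.reachable).trans
        ((m.symm.trans c1).mono hKle0))
    · exact F2 ((((c2.trans n.symm).mono hKle0).trans hadjpq.reachable).trans
        ((m.symm.trans c1).mono hKle0))

lemma aux_swap (ends : EdgeT → Sym2 V) :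
    ∀ t : ℕ, ∀ T : Finset EdgeT, ∀ α β : ℕ → EdgeT,
      IsSpanningTree ends T →
      (∀ i < t, α i ∈ T) →
      (∀ i, 1 ≤ i → i ≤ t → β i ∉ T) →
      (∀ i < t, InFundCycle ends T (β (i + 1)) (α i)) →
      ∃ s : ℕ, ∃ g : ℕ → ℕ, g 0 = 0 ∧ g s = t ∧ (∀ j < s, g j < g (j + 1)) ∧
        IsSpanningTree ends
          ((T \ (Finset.range s).image (fun j => α (g j))) ∪
            (Finset.range s).image (fun j => β (g (j + 1)))) := by
  intro t
  induction t using Nat.strong_induction_on with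
  | _ t IH =>
  intro T α β hT hα hβ hcyc
  rcases Nat.eq_zero_or_pos t with rfl | ht
  · exact ⟨0, id, rfl, rfl, by omega, by simpa using hT⟩
  classical
  set Ks : Finset ℕ := (Finset.Icc 1 t).filter
    (fun i => IsSpanningTree ends (insert (β i) (T.erase (α 0)))) with hKs
  have hne01 : α 0 ≠ β 1 := fun h => hβ 1 le_rfl ht (h ▸ hα 0 ht)
  have h1 : IsSpanningTree ends (insert (β 1) (T.erase (α 0))) := by
    rcases hcyc 0 ht with h | h
    · exact absurd h.symm hne01.symm
    · exact h.2
  have h1K : 1 ∈ Ks := Finset.mem_filter.mpr ⟨Finset.mem_Icc.mpr ⟨le_rfl, ht⟩, h1⟩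
  set k := Ks.max' ⟨1, h1K⟩ with hk
  have hkK : k ∈ Ks := Finset.max'_mem _ _
  have hk1 : 1 ≤ k := (Finset.mem_Icc.mp (Finset.mem_filter.mp hkK).1).1
  have hkt : k ≤ t := (Finset.mem_Icc.mp (Finset.mem_filter.mp hkK).1).2
  have hTk : IsSpanningTree ends (insert (β k) (T.erase (α 0))) :=
    (Finset.mem_filter.mp hkK).2
  have hmax : ∀ i, k < i → i ≤ t →
      ¬ IsSpanningTree ends (insert (β i) (T.erase (α 0))) := by
    intro i hki hit hcon
    have hiK : i ∈ Ks := Finset.mem_filter.mpr ⟨Finset.mem_Icc.mpr ⟨by omega, hit⟩, hcon⟩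
    exact absurd (Finset.le_max' _ _ hiK) (not_le.mpr hki)
  have hswap : ∀ i, i < t →
      IsSpanningTree ends (insert (β (i + 1)) (T.erase (α i))) := by
    intro i hit
    rcases hcyc i hit with h | h
    · exact absurd (h ▸ hα i hit) (hβ (i+1) (by omega) (by omega))
    · exact h.2
  have hane : ∀ i, k ≤ i → i < t → α i ≠ α 0 := by
    intro i h1i h2i h
    exact hmax (i+1) (by omega) (by omega) (h ▸ hswap i h2i)
  have hbne : ∀ i, k < i → i ≤ t → β i ≠ β k := by
    intro i h1i h2i h
    exact hmax i h1i h2i (h ▸ hTk)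
  have hβkT : β k ∉ T := hβ k hk1 hkt
  have hα0T : α 0 ∈ T := hα 0 ht
  set T' : Finset EdgeT := insert (β k) (T.erase (α 0)) with hT'def
  obtain ⟨s', g', hg0, hgs, hmono, htree⟩ :=
    IH (t - k) (by omega) T' (fun i => α (i + k)) (fun i => β (i + k)) hTk
      (fun i hi => Finset.mem_insert_of_mem
        (Finset.mem_erase.mpr ⟨hane (i + k) (by omega) (by omega), hα (i + k) (by omega)⟩))
      (fun i h1i h2i => by
        rw [Finset.mem_insert]
        rintro (h | h)
        · exact hbne (i + k) (by omega) (by omega) h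
        · exact hβ (i + k) (by omega) (by omega) (Finset.mem_of_mem_erase h))
      (fun i hi => by
        refine Or.inr ⟨Finset.mem_insert_of_mem
          (Finset.mem_erase.mpr ⟨hane (i + k) (by omega) (by omega), hα (i + k) (by omega)⟩), ?_⟩
        show IsSpanningTree ends (insert (β (i + 1 + k)) (T'.erase (α (i + k))))
        have harith : i + 1 + k = i + k + 1 := by omega
        rw [harith, hT'def]
        exact key_exchange hT hα0T (hα (i + k) (by omega))
          (hane (i + k) (by omega) (by omega)) hβkT
          (hβ (i + k + 1) (by omega) (by omega))
          (hbne (i + k + 1) (by omega) (by omega))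
          (hswap (i + k) (by omega)) hTk
          (hmax (i + k + 1) (by omega) (by omega)))
  have hchain : ∀ n, n ≤ s' → ∀ m, m < n → g' m < g' n := by
    intro n
    induction n with
    | zero => omega
    | succ n ihn =>
      intro hn m hm
      have h2 := hmono n (by omega)
      rcases Nat.lt_succ_iff_lt_or_eq.mp hm with h | rfl
      · exact (ihn (by omega) m h).trans h2
      · exact h2
  refine ⟨s' + 1, fun j => if j = 0 then 0 else g' (j - 1) + k, if_pos rfl, ?_, ?_, ?_⟩
  · simp only [Nat.add_sub_cancel]
    rw [if_neg (Nat.succ_ne_zero s')]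
    omega
  · intro j hj
    rcases Nat.eq_zero_or_pos j with rfl | hj0
    · simp [hg0]; omega
    · have hj1 : j ≠ 0 := by omega
      have hj2 : j + 1 ≠ 0 := by omega
      simp only [if_neg hj1, if_neg hj2, Nat.add_sub_cancel]
      have := hmono (j - 1) (by omega)
      have harith : j - 1 + 1 = j := by omega
      rw [harith] at this
      omega
  · -- the resulting edge set equals the one from the induction hypothesis
    set A : Finset EdgeT := (Finset.range s').image (fun m => α (g' m + k)) with hA
    set B : Finset EdgeT := (Finset.range s').image (fun m => β (g' (m + 1) + k)) with hB
    have himA : (Finset.range (s' + 1)).image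
        (fun j => α (if j = 0 then 0 else g' (j - 1) + k)) = insert (α 0) A := by
      ext c
      simp only [Finset.mem_image, Finset.mem_range, Finset.mem_insert, hA]
      constructor
      · rintro ⟨j, hj, rfl⟩
        cases j with
        | zero => left; simp
        | succ m => right; exact ⟨m, by omega, by simp⟩
      · rintro (rfl | ⟨m, hm, rfl⟩)
        · exact ⟨0, by omega, by simp⟩
        · exact ⟨m + 1, by omega, by simp⟩
    have himB : (Finset.range (s' + 1)).image
        (fun j => β (if j + 1 = 0 then 0 else g' (j + 1 - 1) + k)) = insert (β k) B := by
      ext c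
      simp only [Finset.mem_image, Finset.mem_range, Finset.mem_insert, hB,
        Nat.add_sub_cancel]
      constructor
      · rintro ⟨j, hj, rfl⟩
        cases j with
        | zero =>
          left
          rw [if_neg (Nat.succ_ne_zero 0)]
          simp [hg0]
        | succ m =>
          right
          exact ⟨m, by omega, by rw [if_neg (Nat.succ_ne_zero (m + 1))]⟩
      · rintro (rfl | ⟨m, hm, rfl⟩)
        · exact ⟨0, by omega, by rw [if_neg (Nat.succ_ne_zero 0)]; simp [hg0]⟩
        · exact ⟨m + 1, by omega, by rw [if_neg (Nat.succ_ne_zero (m + 1))]⟩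
    rw [himA, himB]
    -- side facts
    have hAsub : ∀ c ∈ A, c ∈ T := by
      intro c hc
      obtain ⟨m, hm, rfl⟩ := Finset.mem_image.mp hc
      have := hchain s' le_rfl m (Finset.mem_range.mp hm)
      exact hα _ (by omega)
    have hβkA : β k ∉ A := fun h => hβkT (hAsub _ h)
    have hEq : (T \ insert (α 0) A) ∪ insert (β k) B = (T' \ A) ∪ B := by
      have e1 : T' \ A = insert (β k) (T.erase (α 0) \ A) := by
        rw [hT'def, Finset.insert_sdiff_of_notMem _ hβkA]
      have e2 : T.erase (α 0) \ A = T \ insert (α 0) A := by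
        ext c
        simp only [Finset.mem_sdiff, Finset.mem_erase, Finset.mem_insert]
        tauto
      rw [e1, e2, Finset.union_insert, Finset.insert_union]
    rw [hEq]
    exact htree

end AuxLemmas

/-- Lemma on partial swaps: given tree edges `α i = eᵢvᵢ` (for `0 ≤ i < t`) and non-tree
edges `β i = eᵢuᵢ` (for `1 ≤ i ≤ t`) with `α i ∈ C(T, β (i+1))`, a suitable subsequence
`0 = i₀ < i₁ < ⋯ < i_s = t` can be simultaneously exchanged. -/
theorem partial_swap (ends : EdgeT → Sym2 V)
    (T : Finset EdgeT) (hT : IsSpanningTree ends T) (t : ℕ) (α β : ℕ → EdgeT)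
    (hα : ∀ i < t, α i ∈ T)
    (hβ : ∀ i, 1 ≤ i → i ≤ t → β i ∉ T)
    (hcyc : ∀ i < t, InFundCycle ends T (β (i + 1)) (α i)) :
    ∃ s : ℕ, ∃ g : ℕ → ℕ, g 0 = 0 ∧ g s = t ∧ (∀ j < s, g j < g (j + 1)) ∧
      IsSpanningTree ends
        ((T \ (Finset.range s).image (fun j => α (g j))) ∪
          (Finset.range s).image (fun j => β (g (j + 1)))) := by
  exact aux_swap ends t T α β hT hα hβ hcyc
end

section
/- Let T be a spanning tree of a graph G and let e₀v₀,…,e_{t-1}v_{t-1} ∉ T and e₁u₁,…,e_tu_t ∈ T be edges such that e_{i+1}u_{i+1} ∈ C(T, eᵢvᵢ) for i = 0,…,t−1. Then there exist indices 0 = i₀ < i₁ < … < i_s = t such that T + {e_{i₀}v_{i₀},…,e_{i_{s-1}}v_{i_{s-1}}} − {e_{i₁}u_{i₁},…,e_{i_s}u_{i_s}} is a spanning tree. -/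
variable {V EdgeT : Type*} [Fintype V] [Fintype EdgeT] [DecidableEq V] [DecidableEq EdgeT]

set_option linter.unusedSectionVars false

open Finset SimpleGraph

private lemma sym2_exists (z : Sym2 V) : ∃ x y : V, z = s(x, y) :=
  Sym2.ind (fun x y => ⟨x, y, rfl⟩) z

private lemma reach_trans {G H : SimpleGraph V} (h : ∀ x y, G.Adj x y → H.Reachable x y)
    {x y : V} : G.Reachable x y → H.Reachable x y := by
  rintro ⟨w⟩
  induction w with
  | nil => exact Reachable.refl _
  | cons h' _ ih => exact (h _ _ h').trans ih

private lemma image_erase' {ends : EdgeT → Sym2 V} {S : Finset EdgeT}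
    (hinj : Set.InjOn ends ↑S) {c : EdgeT} (hc : c ∈ S) :
    (S.erase c).image ends = (S.image ends).erase (ends c) := by
  ext e
  simp only [mem_image, mem_erase]
  constructor
  · rintro ⟨d, ⟨hdc, hdS⟩, rfl⟩
    exact ⟨fun h => hdc (hinj hdS hc h), ⟨d, hdS, rfl⟩⟩
  · rintro ⟨hne, d, hdS, rfl⟩
    exact ⟨d, ⟨fun h => hne (by rw [h]), hdS⟩, rfl⟩

private lemma injOn_insert' {ends : EdgeT → Sym2 V} {S : Finset EdgeT}
    (hinj : Set.InjOn ends ↑S) {a : EdgeT} (ha : ends a ∉ S.image ends) :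
    Set.InjOn ends ↑(insert a S) := by
  intro x hx y hy hxy
  simp only [coe_insert, Set.mem_insert_iff, mem_coe] at hx hy
  rcases hx with rfl | hx <;> rcases hy with rfl | hy
  · rfl
  · exact absurd (mem_image.mpr ⟨y, hy, hxy.symm⟩) ha
  · exact absurd (mem_image.mpr ⟨x, hx, hxy⟩) ha
  · exact hinj hx hy hxy

private lemma edgeSet_eq {ends : EdgeT → Sym2 V} {S : Finset EdgeT}
    (hnd : ∀ ε ∈ S, ¬ (ends ε).IsDiag) :
    (SimpleGraph.fromEdgeSet (↑(S.image ends) : Set (Sym2 V))).edgeSet = ↑(S.image ends) := by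
  rw [edgeSet_fromEdgeSet]
  ext e
  simp only [Set.mem_diff, mem_coe, mem_image, Set.mem_setOf_eq, and_iff_left_iff_imp]
  rintro ⟨d, hd, rfl⟩
  exact hnd d hd

private lemma pc {ends : EdgeT → Sym2 V} {T : Finset EdgeT} (hT : IsSpanningTree ends T)
    {a c : EdgeT} (ha : a ∉ T) (hc : c ∈ T) {u v : V}
    (hends : ends a = s(u, v)) (huv : u ≠ v)
    (p : (SimpleGraph.fromEdgeSet (↑(T.image ends) : Set (Sym2 V))).Walk u v) (hp : p.IsPath) :
    IsSpanningTree ends (insert a (T.erase c)) ↔ ends c ∈ p.edges := by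
  obtain ⟨hnd, hinj, htree⟩ := hT
  have hEdge := edgeSet_eq hnd
  have hpe : ∀ e ∈ p.edges, e ∈ T.image ends := by
    intro e he
    have := p.edges_subset_edgeSet he
    rwa [hEdge, mem_coe] at this
  by_cases hcase : ends a ∈ T.image ends
  · -- parallel case
    obtain ⟨d, hdT, hd⟩ := mem_image.1 hcase
    have hadj : (SimpleGraph.fromEdgeSet (↑(T.image ends) : Set (Sym2 V))).Adj u v :=
      (fromEdgeSet_adj _).2 ⟨by rw [← hends]; exact mem_coe.2 hcase, huv⟩
    have hpeq : p = (Path.singleton hadj : _).val := by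
      have := htree.IsAcyclic.path_unique ⟨p, hp⟩ (Path.singleton hadj)
      exact congrArg Subtype.val this
    have hpedges : p.edges = [s(u, v)] := by
      rw [hpeq]; simp [Path.singleton]
    rw [hpedges, List.mem_singleton]
    constructor
    · rintro ⟨hnd', hinj', -⟩
      have hcd : c = d := by
        by_contra hcd
        have hdmem : d ∈ insert a (T.erase c) := mem_insert_of_mem (mem_erase.2 ⟨fun h => hcd h.symm, hdT⟩)
        have hamem : a ∈ insert a (T.erase c) := mem_insert_self _ _
        have : a = d := hinj' (mem_coe.2 hamem) (mem_coe.2 hdmem) (by rw [hd])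
        exact ha (this ▸ hdT)
      rw [hcd, hd, hends]
    · intro hce
      have hca : ends c = ends a := by rw [hce, hends]
      have hcd : c = d := hinj (mem_coe.2 hc) (mem_coe.2 hdT) (by rw [hca, hd])
      have him : (insert a (T.erase c)).image ends = T.image ends := by
        rw [image_insert, image_erase' hinj hc, hca, insert_erase hcase]
      refine ⟨?_, ?_, ?_⟩
      · intro ε hε
        rcases mem_insert.1 hε with rfl | hε
        · rw [hends]; simp [Sym2.mk_isDiag_iff, huv]
        · exact hnd ε (mem_of_mem_erase hε)
      · refine injOn_insert' (hinj.mono ?_) ?_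
        · exact_mod_cast erase_subset c T
        · rw [image_erase' hinj hc, hca]
          exact notMem_erase _ _
      · rw [him]; exact htree
  · -- proper case : ends a is a new edge
    have hfp : ends a ∉ p.edges := fun h => hcase (hpe _ h)
    have hfc : ends a ≠ ends c := fun h => hcase (h ▸ mem_image_of_mem ends hc)
    have himg : (insert a (T.erase c)).image ends
        = insert (ends a) ((T.image ends).erase (ends c)) := by
      rw [image_insert, image_erase' hinj hc]
    constructor
    · rintro ⟨hnd', hinj', htree'⟩
      by_contra hec
      have hsub : ∀ e ∈ p.edges,
          e ∈ (SimpleGraph.fromEdgeSet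
            (↑((insert a (T.erase c)).image ends) : Set (Sym2 V))).edgeSet := by
        intro e he
        rw [edgeSet_eq hnd', mem_coe, himg]
        exact mem_insert_of_mem (mem_erase.2 ⟨fun h => hec (h ▸ he), hpe _ he⟩)
      have hadj' : (SimpleGraph.fromEdgeSet
          (↑((insert a (T.erase c)).image ends) : Set (Sym2 V))).Adj v u := by
        rw [← mem_edgeSet, edgeSet_eq hnd', mem_coe, himg, Sym2.eq_swap, ← hends]
        exact mem_insert_self _ _
      have hcyc : (Walk.cons hadj' (p.transfer _ hsub)).IsCycle := by
        refine Path.cons_isCycle ⟨p.transfer _ hsub, hp.transfer _⟩ hadj' ?_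
        rw [Walk.edges_transfer, Sym2.eq_swap, ← hends]
        exact hfp
      exact htree'.IsAcyclic _ hcyc
    · intro hec
      obtain ⟨x, y, hxy⟩ := sym2_exists (ends c)
      have hxyne : x ≠ y := by
        have := hnd c hc; rw [hxy, Sym2.mk_isDiag_iff] at this; exact this
      -- the augmented graph
      set Gf : SimpleGraph V :=
        SimpleGraph.fromEdgeSet (insert (ends a) (↑(T.image ends) : Set (Sym2 V))) with hGf
      have hGfEdge : Gf.edgeSet = insert (ends a) (↑(T.image ends) : Set (Sym2 V)) := by
        rw [hGf, edgeSet_fromEdgeSet]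
        ext e
        simp only [Set.mem_diff, Set.mem_insert_iff, mem_coe, Set.mem_setOf_eq,
          and_iff_left_iff_imp]
        rintro (rfl | he)
        · rw [hends]; simp [Sym2.mk_isDiag_iff, huv]
        · obtain ⟨d, hd, rfl⟩ := mem_image.1 he; exact hnd d hd
      have hsubf : ∀ e ∈ p.edges, e ∈ Gf.edgeSet := by
        intro e he; rw [hGfEdge]; exact Set.mem_insert_of_mem _ (mem_coe.2 (hpe _ he))
      have hadjf : Gf.Adj v u := by
        rw [← mem_edgeSet, hGfEdge, Sym2.eq_swap, ← hends]; exact Set.mem_insert _ _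
      have hcycf : (Walk.cons hadjf (p.transfer _ hsubf)).IsCycle := by
        refine Path.cons_isCycle ⟨p.transfer _ hsubf, hp.transfer _⟩ hadjf ?_
        rw [Walk.edges_transfer, Sym2.eq_swap, ← hends]
        exact hfp
      have hkey := (adj_and_reachable_delete_edges_iff_exists_cycle (G := Gf)
        (v := x) (w := y)).mpr ⟨v, _, hcycf, by
          rw [Walk.edges_cons, Walk.edges_transfer]
          exact List.mem_cons_of_mem _ (hxy ▸ hec)⟩
      obtain ⟨hadjxy, hreach⟩ := hkey
      -- identify the two graphs
      set G' : SimpleGraph V :=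
        SimpleGraph.fromEdgeSet (↑((insert a (T.erase c)).image ends) : Set (Sym2 V)) with hG'
      have hGeq : Gf \ SimpleGraph.fromEdgeSet {s(x, y)} = G' := by
        rw [hG', himg]
        ext z w
        simp only [sdiff_adj, fromEdgeSet_adj, Set.mem_insert_iff, mem_coe, coe_insert,
          Set.mem_singleton_iff, mem_erase, ← hxy]
        constructor
        · rintro ⟨⟨h1 | h1, h2⟩, h3⟩
          · exact ⟨Or.inl h1, h2⟩
          · refine ⟨Or.inr ⟨?_, h1⟩, h2⟩
            intro h; exact h3 ⟨h, h2⟩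
        · rintro ⟨h1 | ⟨h1, h1'⟩, h2⟩
          · refine ⟨⟨Or.inl h1, h2⟩, ?_⟩
            rintro ⟨h, -⟩; exact hfc (h1 ▸ h)
          · exact ⟨⟨Or.inr h1', h2⟩, fun h => h1 h.1⟩
      have hreach' : G'.Reachable x y := by rw [← hGeq]; exact hreach
      have hG'Edge : G'.edgeSet = ↑((insert a (T.erase c)).image ends) := by
        rw [hG']
        refine edgeSet_eq ?_
        intro ε hε
        rcases mem_insert.1 hε with rfl | hε
        · rw [hends]; simp [Sym2.mk_isDiag_iff, huv]
        · exact hnd ε (mem_of_mem_erase hε)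
      have hconnf : Gf.Connected := by
        refine htree.isConnected.mono ?_
        rw [hGf]
        exact fromEdgeSet_mono (Set.subset_insert _ _)
      have hconn' : G'.Connected := by
        have hpre : ∀ z w, Gf.Adj z w → G'.Reachable z w := by
          intro z w hzw
          rw [hGf, fromEdgeSet_adj] at hzw
          obtain ⟨hm, hne⟩ := hzw
          by_cases hzwc : s(z, w) = ends c
          · rw [hxy] at hzwc
            rcases Sym2.eq_iff.1 hzwc with ⟨rfl, rfl⟩ | ⟨rfl, rfl⟩
            · exact hreach'
            · exact hreach'.symm
          · refine Adj.reachable ?_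
            rw [hG', fromEdgeSet_adj, mem_coe, himg]
            rcases hm with h | h
            · exact ⟨by rw [h]; exact mem_insert_self _ _, hne⟩
            · exact ⟨mem_insert_of_mem (mem_erase.2 ⟨hzwc, mem_coe.1 h⟩), hne⟩
        rw [connected_iff]
        exact ⟨fun z w => reach_trans hpre (hconnf.preconnected z w), hconnf.nonempty⟩
      have hacyc' : G'.IsAcyclic := by
        intro z cyc' hcyc'
        by_cases hfin : s(u, v) ∈ cyc'.edges
        · obtain ⟨-, hr⟩ := (adj_and_reachable_delete_edges_iff_exists_cycle (G := G')
            (v := u) (w := v)).mpr ⟨z, cyc', hcyc', hfin⟩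
          have hle : G' \ SimpleGraph.fromEdgeSet {s(u, v)}
              ≤ SimpleGraph.fromEdgeSet (↑((T.image ends).erase (ends c)) : Set (Sym2 V)) := by
            intro z' w' hzw
            rw [sdiff_adj] at hzw
            obtain ⟨hzw1, hzw2⟩ := hzw
            rw [hG', fromEdgeSet_adj] at hzw1
            obtain ⟨h1, hne⟩ := hzw1
            rw [mem_coe, himg, mem_insert] at h1
            rcases h1 with h1 | h1
            · exact absurd ((fromEdgeSet_adj _).2
                ⟨Set.mem_singleton_iff.2 (by rw [h1, hends]), hne⟩) hzw2
            · exact (fromEdgeSet_adj _).2 ⟨mem_coe.2 h1, hne⟩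
          obtain ⟨q⟩ := hr.mono hle
          have hsubq : ∀ e ∈ q.toPath.val.edges,
              e ∈ (SimpleGraph.fromEdgeSet (↑(T.image ends) : Set (Sym2 V))).edgeSet := by
            intro e he
            have h1 := Walk.edges_subset_edgeSet _ he
            rw [edgeSet_fromEdgeSet, Set.mem_diff, mem_coe, mem_erase] at h1
            rw [hEdge, mem_coe]
            exact h1.1.2
          have hq' : (q.toPath.val.transfer _ hsubq).IsPath :=
            (q.toPath.2).transfer _
          have hequ := htree.IsAcyclic.path_unique ⟨_, hq'⟩ ⟨p, hp⟩
          have hval : q.toPath.val.transfer _ hsubq = p := congrArg Subtype.val hequ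
          have : ends c ∈ (q.toPath.val.transfer _ hsubq).edges := by rw [hval]; exact hec
          rw [Walk.edges_transfer] at this
          have h1 := Walk.edges_subset_edgeSet _ this
          rw [edgeSet_fromEdgeSet, Set.mem_diff, mem_coe, mem_erase] at h1
          exact h1.1.1 rfl
        · have hsubc : ∀ e ∈ cyc'.edges,
              e ∈ (SimpleGraph.fromEdgeSet (↑(T.image ends) : Set (Sym2 V))).edgeSet := by
            intro e he
            have h1 := cyc'.edges_subset_edgeSet he
            rw [hG'Edge, mem_coe, himg, mem_insert] at h1
            rcases h1 with h1 | h1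
            · exact absurd (by rw [← hends, ← h1]; exact he) hfin
            · rw [hEdge, mem_coe]; exact mem_of_mem_erase h1
          exact htree.IsAcyclic _ (hcyc'.transfer hsubc)
      refine ⟨?_, ?_, ⟨hconn', hacyc'⟩⟩
      · intro ε hε
        rcases mem_insert.1 hε with rfl | hε
        · rw [hends]; simp [Sym2.mk_isDiag_iff, huv]
        · exact hnd ε (mem_of_mem_erase hε)
      · refine injOn_insert' (hinj.mono ?_) ?_
        · exact_mod_cast erase_subset c T
        · intro h
          exact hcase (image_subset_image (erase_subset c T) h)

private lemma main_iff {ends : EdgeT → Sym2 V} {T : Finset EdgeT} (hT : IsSpanningTree ends T)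
    {a a' b c : EdgeT} (ha : a ∉ T) (ha' : a' ∉ T) (haa : a' ≠ a)
    (hb : b ∈ T) (hc : c ∈ T) (hcb : c ≠ b)
    (hTa : IsSpanningTree ends (insert a (T.erase b)))
    (hneg : ¬ IsSpanningTree ends (insert a' (T.erase b))) :
    IsSpanningTree ends (insert a' ((insert a (T.erase b)).erase c)) ↔
      IsSpanningTree ends (insert a' (T.erase c)) := by
  by_cases hdiag : (ends a').IsDiag
  · constructor <;> intro h <;>
      exact absurd (h.1 a' (mem_insert_self _ _) hdiag) not_false
  · obtain ⟨u, v, huv'⟩ := sym2_exists (ends a')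
    have huv : u ≠ v := by
      rw [huv', Sym2.mk_isDiag_iff] at hdiag; exact hdiag
    obtain ⟨w⟩ := hT.2.2.isConnected.preconnected u v
    set p := w.toPath.val with hpdef
    have hp : p.IsPath := w.toPath.2
    have hbp : ends b ∉ p.edges := by
      intro h
      exact hneg ((pc hT ha' hb huv' huv p hp).mpr h)
    -- T' = insert a (T.erase b)
    have ha'T' : a' ∉ insert a (T.erase b) := by
      intro h
      rcases mem_insert.1 h with rfl | h
      · exact haa rfl
      · exact ha' (mem_of_mem_erase h)
    have hcT' : c ∈ insert a (T.erase b) := mem_insert_of_mem (mem_erase.2 ⟨hcb, hc⟩)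
    have hsub : ∀ e ∈ p.edges,
        e ∈ (SimpleGraph.fromEdgeSet
          (↑((insert a (T.erase b)).image ends) : Set (Sym2 V))).edgeSet := by
      intro e he
      rw [edgeSet_eq hTa.1, mem_coe, image_insert, image_erase' hT.2.1 hb]
      refine mem_insert_of_mem (mem_erase.2 ⟨fun h => hbp (h ▸ he), ?_⟩)
      have := p.edges_subset_edgeSet he
      rwa [edgeSet_eq hT.1, mem_coe] at this
    rw [pc hT ha' hc huv' huv p hp,
      pc hTa ha'T' hcT' huv' huv (p.transfer _ hsub) (hp.transfer _),
      Walk.edges_transfer]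

private lemma sim {ends : EdgeT → Sym2 V} :
    ∀ (s : ℕ) (T : Finset EdgeT) (a b : ℕ → EdgeT),
    IsSpanningTree ends T →
    (∀ j < s, a j ∉ T) → (∀ j < s, b j ∈ T) →
    (∀ j < s, IsSpanningTree ends (insert (a j) (T.erase (b j)))) →
    (∀ i j, i < j → j < s → ¬ IsSpanningTree ends (insert (a i) (T.erase (b j)))) →
    (∀ i j, i < j → j < s → a i ≠ a j) →
    (∀ i j, i < j → j < s → b i ≠ b j) →
    IsSpanningTree ends ((T ∪ (Finset.range s).image a) \ (Finset.range s).image b)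
  | 0, T, a, b, hT, _, _, _, _, _, _ => by
      simpa using hT
  | (s + 1), T, a, b, hT, haT, hbT, hswap, htri, hainj, hbinj => by
      have hss : s < s + 1 := Nat.lt_succ_self s
      have hT' : IsSpanningTree ends (insert (a s) (T.erase (b s))) := hswap s hss
      have hasT : a s ∉ T := haT s hss
      have hbsT : b s ∈ T := hbT s hss
      have key := sim s (insert (a s) (T.erase (b s))) a b hT'
        (by
          intro j hj
          intro h
          rcases mem_insert.1 h with h | h
          · exact hainj j s hj hss h
          · exact haT j (hj.trans hss) (mem_of_mem_erase h))
        (by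
          intro j hj
          exact mem_insert_of_mem (mem_erase.2 ⟨hbinj j s hj hss, hbT j (hj.trans hss)⟩))
        (by
          intro j hj
          rw [main_iff hT hasT (haT j (hj.trans hss)) (hainj j s hj hss) hbsT
            (hbT j (hj.trans hss)) (hbinj j s hj hss) hT' (htri j s hj hss)]
          exact hswap j (hj.trans hss))
        (by
          intro i j hij hj
          rw [main_iff hT hasT (haT i ((hij.trans hj).trans hss)) (hainj i s (hij.trans hj) hss)
            hbsT (hbT j (hj.trans hss)) (hbinj j s hj hss) hT' (htri i s (hij.trans hj) hss)]
          exact htri i j hij (hj.trans hss))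
        (fun i j hij hj => hainj i j hij (hj.trans hss))
        (fun i j hij hj => hbinj i j hij (hj.trans hss))
      have hset : (insert (a s) (T.erase (b s)) ∪ (Finset.range s).image a)
            \ (Finset.range s).image b
          = (T ∪ (Finset.range (s + 1)).image a) \ (Finset.range (s + 1)).image b := by
        ext x
        simp only [mem_sdiff, mem_union, mem_insert, mem_erase, mem_image, mem_range,
          Finset.range_add_one, mem_insert]
        constructor
        · rintro ⟨(rfl | ⟨hxb, hxT⟩) | ⟨j, hj, rfl⟩, h2⟩
          · refine ⟨Or.inr ⟨s, Or.inl rfl, rfl⟩, ?_⟩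
            rintro ⟨j, rfl | hj, hxj⟩
            · exact hasT (hxj ▸ hbsT)
            · exact hasT (hxj ▸ hbT j (hj.trans hss))
          · refine ⟨Or.inl hxT, ?_⟩
            rintro ⟨j, rfl | hj, hxj⟩
            · exact hxb hxj.symm
            · exact h2 ⟨j, hj, hxj⟩
          · refine ⟨Or.inr ⟨j, Or.inr hj, rfl⟩, ?_⟩
            rintro ⟨i, rfl | hi, hxi⟩
            · exact haT j (hj.trans hss) (hxi ▸ hbsT)
            · exact h2 ⟨i, hi, hxi⟩
        · rintro ⟨h1, h2⟩
          have hxbs : x ≠ b s := fun h => h2 ⟨s, Or.inl rfl, h.symm⟩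
          have h2' : ¬ ∃ j, j < s ∧ b j = x := by
            rintro ⟨j, hj, hxj⟩; exact h2 ⟨j, Or.inr hj, hxj⟩
          rcases h1 with hxT | ⟨j, rfl | hj, rfl⟩
          · exact ⟨Or.inl (Or.inr ⟨hxbs, hxT⟩), h2'⟩
          · exact ⟨Or.inl (Or.inl rfl), h2'⟩
          · exact ⟨Or.inr ⟨j, hj, rfl⟩, h2'⟩
      rw [hset] at key
      exact key

open Classical in
private noncomputable def nextIdx (ends : EdgeT → Sym2 V) (T : Finset EdgeT) (t : ℕ)
    (α β : ℕ → EdgeT) (i : ℕ) : ℕ :=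
  if h : ((Finset.range (t + 1)).filter fun k =>
      i < k ∧ IsSpanningTree ends (insert (α i) (T.erase (β k)))).Nonempty
  then ((Finset.range (t + 1)).filter fun k =>
      i < k ∧ IsSpanningTree ends (insert (α i) (T.erase (β k)))).max' h
  else t

private lemma nextIdx_spec (ends : EdgeT → Sym2 V) (T : Finset EdgeT) (t : ℕ)
    (α β : ℕ → EdgeT) (i : ℕ) (hi : i < t)
    (hR : IsSpanningTree ends (insert (α i) (T.erase (β (i + 1))))) :
    i < nextIdx ends T t α β i ∧ nextIdx ends T t α β i ≤ t ∧
      IsSpanningTree ends (insert (α i) (T.erase (β (nextIdx ends T t α β i)))) ∧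
      ∀ k ≤ t, nextIdx ends T t α β i < k →
        ¬ IsSpanningTree ends (insert (α i) (T.erase (β k))) := by
  classical
  have hne : ((Finset.range (t + 1)).filter fun k =>
      i < k ∧ IsSpanningTree ends (insert (α i) (T.erase (β k)))).Nonempty := by
    refine ⟨i + 1, mem_filter.2 ⟨mem_range.2 (by omega), by omega, hR⟩⟩
  have heq : nextIdx ends T t α β i = ((Finset.range (t + 1)).filter fun k =>
      i < k ∧ IsSpanningTree ends (insert (α i) (T.erase (β k)))).max' hne := by
    simp only [nextIdx]
    rw [dif_pos hne]
  have hmem := Finset.max'_mem _ hne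
  rw [mem_filter, mem_range] at hmem
  refine ⟨heq ▸ hmem.2.1, heq ▸ (by omega : _ ≤ t), heq ▸ hmem.2.2, ?_⟩
  intro k hk hlt hST
  rw [heq] at hlt
  have hik : i < k := lt_trans hmem.2.1 hlt
  have := Finset.le_max' ((Finset.range (t + 1)).filter fun k =>
      i < k ∧ IsSpanningTree ends (insert (α i) (T.erase (β k)))) k
    (mem_filter.2 ⟨mem_range.2 (by omega), hik, hST⟩)
  omega

private lemma nextIdx_stop (ends : EdgeT → Sym2 V) (T : Finset EdgeT) (t : ℕ)
    (α β : ℕ → EdgeT) : nextIdx ends T t α β t = t := by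
  classical
  simp only [nextIdx]
  rw [dif_neg]
  rintro ⟨k, hk⟩
  rw [mem_filter, mem_range] at hk
  omega

private noncomputable def gIdx (ends : EdgeT → Sym2 V) (T : Finset EdgeT) (t : ℕ)
    (α β : ℕ → EdgeT) : ℕ → ℕ
  | 0 => 0
  | j + 1 => nextIdx ends T t α β (gIdx ends T t α β j)

/-- Lemma on partial swaps, second variant: given non-tree edges `α i = eᵢvᵢ`
(for `0 ≤ i < t`) and tree edges `β i = eᵢuᵢ` (for `1 ≤ i ≤ t`) with
`β (i+1) ∈ C(T, α i)`, a suitable subsequence `0 = i₀ < i₁ < ⋯ < i_s = t` can be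
simultaneously exchanged. -/
theorem partial_swap' (ends : EdgeT → Sym2 V)
    (T : Finset EdgeT) (hT : IsSpanningTree ends T) (t : ℕ) (α β : ℕ → EdgeT)
    (hα : ∀ i < t, α i ∉ T)
    (hβ : ∀ i, 1 ≤ i → i ≤ t → β i ∈ T)
    (hcyc : ∀ i < t, InFundCycle ends T (α i) (β (i + 1))) :
    ∃ s : ℕ, ∃ g : ℕ → ℕ, g 0 = 0 ∧ g s = t ∧ (∀ j < s, g j < g (j + 1)) ∧
      IsSpanningTree ends
        ((T ∪ (Finset.range s).image (fun j => α (g j))) \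
          (Finset.range s).image (fun j => β (g (j + 1)))) := by
  classical
  have hchain : ∀ i < t, IsSpanningTree ends (insert (α i) (T.erase (β (i + 1)))) := by
    intro i hi
    rcases hcyc i hi with h | h
    · exact absurd (h ▸ hβ (i + 1) (by omega) (by omega)) (hα i hi)
    · exact h.2
  set g : ℕ → ℕ := gIdx ends T t α β with hg
  have hgsucc : ∀ j, g (j + 1) = nextIdx ends T t α β (g j) := fun j => rfl
  have hspec : ∀ j, g j < t →
      g j < g (j + 1) ∧ g (j + 1) ≤ t ∧
        IsSpanningTree ends (insert (α (g j)) (T.erase (β (g (j + 1))))) ∧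
        ∀ k ≤ t, g (j + 1) < k →
          ¬ IsSpanningTree ends (insert (α (g j)) (T.erase (β k))) := by
    intro j hj
    rw [hgsucc]
    exact nextIdx_spec ends T t α β (g j) hj (hchain (g j) hj)
  have hstay : ∀ j, g j = t → g (j + 1) = t := by
    intro j hj
    rw [hgsucc, hj, nextIdx_stop]
  have hC : ∀ j, g j = t ∨ (j ≤ g j ∧ g j < t) := by
    intro j
    induction j with
    | zero =>
      by_cases h : t = 0
      · left; rw [hg]; simpa [gIdx] using h.symm
      · right; constructor
        · exact Nat.zero_le _
        · show gIdx ends T t α β 0 < t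
          simp only [gIdx]; omega
    | succ j ih =>
      rcases ih with h | ⟨h1, h2⟩
      · left; exact hstay j h
      · have hsp := hspec j h2
        by_cases h3 : g (j + 1) = t
        · left; exact h3
        · right; exact ⟨by omega, lt_of_le_of_ne hsp.2.1 h3⟩
  have hex : ∃ j, g j = t := by
    rcases hC t with h | ⟨h1, h2⟩
    · exact ⟨t, h⟩
    · exact ⟨t, by omega⟩
  set s := Nat.find hex with hs
  have hgsEq : g s = t := Nat.find_spec hex
  have hlt : ∀ j < s, g j < t := by
    intro j hj
    rcases hC j with h | h
    · exact absurd h (Nat.find_min hex hj)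
    · exact h.2
  have hstep : ∀ j < s, g j < g (j + 1) := fun j hj => (hspec j (hlt j hj)).1
  have hmono : ∀ l, l ≤ s → ∀ m < l, g m < g l := by
    intro l
    induction l with
    | zero => omega
    | succ l ih =>
      intro hl m hm
      have hls : l < s := by omega
      rcases Nat.lt_succ_iff_lt_or_eq.1 hm with hm' | rfl
      · exact (ih (by omega) m hm').trans (hstep l hls)
      · exact hstep m hls
  have hle_t : ∀ l, l ≤ s → g l ≤ t := by
    intro l hl
    rcases eq_or_lt_of_le hl with rfl | hl'
    · exact le_of_eq hgsEq
    · exact le_of_lt (hlt l hl')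
  refine ⟨s, g, rfl, hgsEq, hstep, ?_⟩
  refine sim s T (fun j => α (g j)) (fun j => β (g (j + 1))) hT
    (fun j hj => hα _ (hlt j hj))
    (fun j hj => hβ _ (by have := hstep j hj; omega) (hle_t (j + 1) hj))
    (fun j hj => (hspec j (hlt j hj)).2.2.1)
    ?_ ?_ ?_
  · -- triangular
    intro i j hij hj
    refine (hspec i (hlt i (hij.trans hj))).2.2.2 (g (j + 1)) (hle_t (j + 1) hj) ?_
    exact hmono (j + 1) hj (i + 1) (by omega)
  · -- α injective
    intro i j hij hj h
    refine (hspec i (hlt i (hij.trans hj))).2.2.2 (g (j + 1)) (hle_t (j + 1) hj)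
      (hmono (j + 1) hj (i + 1) (by omega)) ?_
    rw [show α (g i) = α (g j) from h]
    exact (hspec j (hlt j hj)).2.2.1
  · -- β injective
    intro i j hij hj h
    refine (hspec i (hlt i (hij.trans hj))).2.2.2 (g (j + 1)) (hle_t (j + 1) hj)
      (hmono (j + 1) hj (i + 1) (by omega)) ?_
    rw [← show β (g (i + 1)) = β (g (j + 1)) from h]
    exact (hspec i (hlt i (hij.trans hj))).2.2.1
end

section
/- Let H be a connected hypergraph and let h, h' be hypertrees of H with h(e) < h'(e) for some hyperedge e. Then there exists a hyperedge f with h(f) > h'(f) such that both h + 1_e − 1_f and h' − 1_e + 1_f are hypertrees. In other words, the set of hypertrees of H forms the set of bases of an integer polymatroid. -/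
variable {V E : Type*} [Fintype V] [Fintype E] [DecidableEq V] [DecidableEq E]

/-- The edge of the bipartite graph `Bip H` corresponding to an incidence `(e, v)`,
as an unordered pair of nodes in `V ⊕ E` (violet nodes `Sum.inl v`, emerald nodes
`Sum.inr e`). -/
def bipSym2 (p : E × V) : Sym2 (V ⊕ E) := s(Sum.inl p.2, Sum.inr p.1)

/-- The underlying bipartite graph of the hypergraph with incidence relation `inc`. -/
def bipGraph (inc : E → V → Prop) : SimpleGraph (V ⊕ E) :=
  SimpleGraph.fromEdgeSet (bipSym2 '' {p | inc p.1 p.2})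

/-- `T` is (the edge set of) a spanning tree of the bipartite graph `Bip H` of the
hypergraph with incidence relation `inc`. -/
def IsSpanningTreeB (inc : E → V → Prop) (T : Finset (E × V)) : Prop :=
  (∀ p ∈ T, inc p.1 p.2) ∧
    (SimpleGraph.fromEdgeSet (↑(T.image bipSym2) : Set (Sym2 (V ⊕ E)))).IsTree

/-- The spanning tree `T` of `Bip H` represents the vector `h : E → ℤ`, i.e. `T` has
degree `h e + 1` at each emerald node `e`. -/
def Represents (T : Finset (E × V)) (h : E → ℤ) : Prop :=
  ∀ e : E, ((T.filter (fun p => p.1 = e)).card : ℤ) = h e + 1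

/-- `h` is a hypertree of the hypergraph with incidence relation `inc`. -/
def IsHypertree (inc : E → V → Prop) (h : E → ℤ) : Prop :=
  ∃ T : Finset (E × V), IsSpanningTreeB inc T ∧ Represents T h

open SimpleGraph

variable {α : Type*}

/-- Deleting an edge `s(p,q)`: any vertex reaching `p` still reaches `p` or `q`. -/
lemma reach_or_aux {G : SimpleGraph α} (p q : α) :
    ∀ {z t : α}, G.Walk z t →
      (G \ fromEdgeSet {s(p, q)}).Reachable z t ∨
      (G \ fromEdgeSet {s(p, q)}).Reachable z p ∨
      (G \ fromEdgeSet {s(p, q)}).Reachable z q := by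
  intro z t w
  induction w with
  | nil => exact Or.inl (Reachable.refl _)
  | @cons z b t hadj tail ih =>
    by_cases he : s(z, b) = s(p, q)
    · rw [Sym2.eq_iff] at he
      rcases he with ⟨rfl, rfl⟩ | ⟨rfl, rfl⟩
      · exact Or.inr (Or.inl (Reachable.refl _))
      · exact Or.inr (Or.inr (Reachable.refl _))
    · have hadj' : (G \ fromEdgeSet {s(p, q)}).Adj z b := by
        simp only [sdiff_adj, fromEdgeSet_adj, Set.mem_singleton_iff]
        exact ⟨hadj, fun hc => he hc.1⟩
      rcases ih with h | h | h
      · exact Or.inl (hadj'.reachable.trans h)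
      · exact Or.inr (Or.inl (hadj'.reachable.trans h))
      · exact Or.inr (Or.inr (hadj'.reachable.trans h))

lemma reach_or {G : SimpleGraph α} {p q z : α} (h : G.Reachable z p) :
    (G \ fromEdgeSet {s(p, q)}).Reachable z p ∨ (G \ fromEdgeSet {s(p, q)}).Reachable z q := by
  obtain ⟨w⟩ := h
  rcases reach_or_aux p q w with h | h | h
  · exact Or.inl h
  · exact Or.inl h
  · exact Or.inr h

/-- A trail from inside `S` to outside `S` crosses the boundary at some edge,
and the endpoints remain reachable after deleting that edge. -/
lemma cross {G : SimpleGraph α} (S : Set α) :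
    ∀ {x y : α} (p : G.Walk x y), p.edges.Nodup → x ∈ S → y ∉ S →
      ∃ u w, u ∈ S ∧ w ∉ S ∧ G.Adj u w ∧ s(u, w) ∈ p.edges ∧
        (G \ fromEdgeSet {s(u, w)}).Reachable x u ∧
        (G \ fromEdgeSet {s(u, w)}).Reachable w y := by
  intro x y p
  induction p with
  | nil => intro _ hx hy; exact absurd hx hy
  | @cons x b y hadj q ih =>
    intro hnd hx hy
    rw [SimpleGraph.Walk.edges_cons, List.nodup_cons] at hnd
    by_cases hb : b ∈ S
    · obtain ⟨u, w, hu, hw, huw, hmem, r1, r2⟩ := ih hnd.2 hb hy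
      have hne : s(x, b) ≠ s(u, w) := fun hc => hnd.1 (hc ▸ hmem)
      have hadj' : (G \ fromEdgeSet {s(u, w)}).Adj x b := by
        simp only [sdiff_adj, fromEdgeSet_adj, Set.mem_singleton_iff]
        exact ⟨hadj, fun hc => hne hc.1⟩
      exact ⟨u, w, hu, hw, huw, List.mem_cons_of_mem _ hmem, hadj'.reachable.trans r1, r2⟩
    · refine ⟨x, b, hx, hb, hadj, List.mem_cons_self, Reachable.refl _, ?_⟩
      have hq : ∀ e ∈ q.edges, e ∉ ({s(x, b)} : Set (Sym2 α)) := by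
        intro e he hc
        rw [Set.mem_singleton_iff] at hc
        exact hnd.1 (hc ▸ he)
      exact ⟨q.toDeleteEdges _ hq⟩

variable [DecidableEq α]

/-- Symmetric exchange for spanning trees given as finsets of edges. -/
lemma tree_exchange (s s' : Finset (Sym2 α))
    (hs : (fromEdgeSet (↑s : Set (Sym2 α))).IsTree)
    (hs' : (fromEdgeSet (↑s' : Set (Sym2 α))).IsTree)
    (x y : α) (hxy : x ≠ y) (hA' : s(x, y) ∈ s') (hAs : s(x, y) ∉ s) :
    ∃ B ∈ s, B ∉ s' ∧
      (fromEdgeSet (↑((insert s(x, y) s).erase B) : Set (Sym2 α))).IsTree ∧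
      (fromEdgeSet (↑((insert B s').erase s(x, y)) : Set (Sym2 α))).IsTree := by
  classical
  set A : Sym2 α := s(x, y) with hA
  set G : SimpleGraph α := fromEdgeSet (↑s) with hG
  set G' : SimpleGraph α := fromEdgeSet (↑s') with hG'
  set D' : SimpleGraph α := G' \ fromEdgeSet {A} with hD'
  have hG'xy : G'.Adj x y := by
    rw [hG', fromEdgeSet_adj]; exact ⟨by exact_mod_cast hA', hxy⟩
  have hGxy : ¬G.Adj x y := by
    rw [hG, fromEdgeSet_adj]; rintro ⟨hc, -⟩; exact hAs (by exact_mod_cast hc)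
  have hbr : ¬D'.Reachable x y :=
    (isBridge_iff.mp (isAcyclic_iff_forall_adj_isBridge.mp hs'.IsAcyclic hG'xy))
  set S : Set α := {z | D'.Reachable z x} with hS
  have hxS : x ∈ S := Reachable.refl _
  have hyS : y ∉ S := fun h => hbr (Reachable.symm h)
  -- a path in G from x to y
  obtain ⟨w0⟩ := hs.isConnected.preconnected x y
  obtain ⟨u, w, huS, hwS, huw, hmem, r1, r2⟩ :=
    cross S w0.toPath.1 w0.toPath.2.isTrail.edges_nodup hxS hyS
  clear hmem
  set B : Sym2 α := s(u, w) with hB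
  set D : SimpleGraph α := G \ fromEdgeSet {B} with hD
  have hBs : B ∈ s := by
    have h2 := huw
    rw [hG, fromEdgeSet_adj] at h2
    exact_mod_cast h2.1
  have hBA : B ≠ A := fun hc => hAs (hc ▸ hBs)
  have hBs' : B ∉ s' := by
    intro hc
    have hD'uw : D'.Adj u w := by
      rw [hD', sdiff_adj, fromEdgeSet_adj]
      refine ⟨⟨by exact_mod_cast hc, huw.ne⟩, ?_⟩
      rintro ⟨h1, -⟩; exact hBA h1
    exact hwS (hD'uw.symm.reachable.trans huS)
  have hbrB : ¬D.Reachable u w :=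
    (isBridge_iff.mp (isAcyclic_iff_forall_adj_isBridge.mp hs.IsAcyclic huw))
  -- set identities
  have e₁ : (↑((insert A s).erase B) : Set (Sym2 α)) = (insert A (↑s) : Set (Sym2 α)) \ {B} := by
    simp
  have e₂ : (↑((insert B s').erase A) : Set (Sym2 α)) = (insert B (↑s') : Set (Sym2 α)) \ {A} := by
    simp
  set H₁ : SimpleGraph α := fromEdgeSet ((insert A (↑s) : Set (Sym2 α)) \ {B}) with hH₁
  set H₂ : SimpleGraph α := fromEdgeSet ((insert B (↑s') : Set (Sym2 α)) \ {A}) with hH₂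
  have hDeq : D = fromEdgeSet ((↑s : Set (Sym2 α)) \ {B}) := by
    rw [hD, hG, fromEdgeSet_sdiff]
  have hD'eq : D' = fromEdgeSet ((↑s' : Set (Sym2 α)) \ {A}) := by
    rw [hD', hG', fromEdgeSet_sdiff]
  have hDH₁ : D ≤ H₁ := by
    rw [hDeq, hH₁]
    exact fromEdgeSet_mono (Set.diff_subset_diff_left (Set.subset_insert _ _))
  have hD'H₂ : D' ≤ H₂ := by
    rw [hD'eq, hH₂]
    exact fromEdgeSet_mono (Set.diff_subset_diff_left (Set.subset_insert _ _))
  have hH₁xy : H₁.Adj x y := by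
    rw [hH₁, fromEdgeSet_adj]
    exact ⟨⟨Set.mem_insert _ _, fun hc => hBA (hc.symm ▸ rfl)⟩, hxy⟩
  have hH₂uw : H₂.Adj u w := by
    rw [hH₂, fromEdgeSet_adj]
    exact ⟨⟨Set.mem_insert _ _, fun hc => hBA (hc ▸ rfl)⟩, huw.ne⟩
  -- connectivity of H₁
  have hcon₁ : ∀ z, H₁.Reachable z u := by
    intro z
    rcases reach_or (q := w) (hs.isConnected.preconnected z u) with h | h
    · exact (h.mono hDH₁)
    · exact ((h.trans r2).mono hDH₁).trans
        (hH₁xy.symm.reachable.trans (r1.mono hDH₁))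
  haveI : Nonempty α := ⟨u⟩
  have hconn₁ : H₁.Connected := ⟨fun z₁ z₂ => (hcon₁ z₁).trans (hcon₁ z₂).symm⟩
  -- w reaches y in D'
  have hwy : D'.Reachable w y := by
    rcases reach_or (q := y) (hs'.isConnected.preconnected w x) with h | h
    · exact absurd h hwS
    · exact h
  -- connectivity of H₂
  have hcon₂ : ∀ z, H₂.Reachable z u := by
    intro z
    rcases reach_or (q := y) (hs'.isConnected.preconnected z x) with h | h
    · exact ((h.trans huS.symm).mono hD'H₂)
    · exact ((h.trans hwy.symm).mono hD'H₂).trans hH₂uw.symm.reachable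
  have hconn₂ : H₂.Connected := ⟨fun z₁ z₂ => (hcon₂ z₁).trans (hcon₂ z₂).symm⟩
  -- acyclicity of H₁
  have hacy₁ : H₁.IsAcyclic := by
    intro v c hc
    by_cases hAc : A ∈ c.edges
    · have hre := (adj_and_reachable_delete_edges_iff_exists_cycle.mpr ⟨v, c, hc, hAc⟩).2
      have hle : H₁ \ fromEdgeSet {A} ≤ D := by
        rw [hH₁, ← fromEdgeSet_sdiff, hDeq]
        refine fromEdgeSet_mono ?_
        rintro z ⟨⟨hz1, hz2⟩, hz3⟩
        rcases Set.mem_insert_iff.mp hz1 with h | h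
        · exact absurd h hz3
        · exact ⟨h, hz2⟩
      have : D.Reachable x y := hre.mono hle
      exact hbrB ((r1.symm.trans this).trans r2.symm)
    · refine hs.IsAcyclic (c.transfer G fun e he => ?_) (hc.transfer _)
      have := c.edges_subset_edgeSet he
      rw [hH₁, edgeSet_fromEdgeSet] at this
      obtain ⟨⟨h1, h2⟩, h3⟩ := this
      rcases Set.mem_insert_iff.mp h1 with h | h
      · exact absurd h (fun hh => hAc (hh ▸ he))
      · rw [hG, edgeSet_fromEdgeSet]; exact ⟨h, h3⟩
  -- acyclicity of H₂
  have hacy₂ : H₂.IsAcyclic := by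
    intro v c hc
    by_cases hBc : B ∈ c.edges
    · have hre := (adj_and_reachable_delete_edges_iff_exists_cycle.mpr ⟨v, c, hc, hBc⟩).2
      have hle : H₂ \ fromEdgeSet {B} ≤ D' := by
        rw [hH₂, ← fromEdgeSet_sdiff, hD'eq]
        refine fromEdgeSet_mono ?_
        rintro z ⟨⟨hz1, hz2⟩, hz3⟩
        rcases Set.mem_insert_iff.mp hz1 with h | h
        · exact absurd h hz3
        · exact ⟨h, hz2⟩
      exact hwS ((hre.mono hle).symm.trans huS)
    · refine hs'.IsAcyclic (c.transfer G' fun e he => ?_) (hc.transfer _)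
      have := c.edges_subset_edgeSet he
      rw [hH₂, edgeSet_fromEdgeSet] at this
      obtain ⟨⟨h1, h2⟩, h3⟩ := this
      rcases Set.mem_insert_iff.mp h1 with h | h
      · exact absurd h (fun hh => hBc (hh ▸ he))
      · rw [hG', edgeSet_fromEdgeSet]; exact ⟨h, h3⟩
  refine ⟨B, hBs, hBs', ?_, ?_⟩
  · rw [e₁]; exact ⟨hconn₁, hacy₁⟩
  · rw [e₂]; exact ⟨hconn₂, hacy₂⟩


lemma bipSym2_injective : Function.Injective (bipSym2 (V := V) (E := E)) := by
  intro p q hpq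
  unfold bipSym2 at hpq
  rw [Sym2.eq_iff] at hpq
  rcases hpq with ⟨h1, h2⟩ | ⟨h1, h2⟩
  · exact Prod.ext (Sum.inr.inj h2) (Sum.inl.inj h1)
  · simp at h1

lemma spanning_swap (inc : E → V → Prop) (T T' : Finset (E × V))
    (hT : IsSpanningTreeB inc T) (hT' : IsSpanningTreeB inc T')
    {a : E × V} (ha : a ∈ T') (han : a ∉ T) :
    ∃ b ∈ T, b ∉ T' ∧ IsSpanningTreeB inc ((insert a T).erase b) ∧
      IsSpanningTreeB inc ((insert b T').erase a) := by
  have hxy : (Sum.inl a.2 : V ⊕ E) ≠ Sum.inr a.1 := Sum.inl_ne_inr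
  have hA' : bipSym2 a ∈ T'.image bipSym2 := Finset.mem_image_of_mem _ ha
  have hAs : bipSym2 a ∉ T.image bipSym2 := by
    intro hc
    obtain ⟨p, hp, hpa⟩ := Finset.mem_image.mp hc
    exact han (bipSym2_injective hpa ▸ hp)
  obtain ⟨B, hBs, hBs', htree1, htree2⟩ :=
    tree_exchange (T.image bipSym2) (T'.image bipSym2) hT.2 hT'.2
      (Sum.inl a.2) (Sum.inr a.1) hxy hA' hAs
  obtain ⟨b, hbT, rfl⟩ := Finset.mem_image.mp hBs
  have hbT' : b ∉ T' := fun hc => hBs' (Finset.mem_image_of_mem _ hc)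
  have him1 : ((insert a T).erase b).image bipSym2 =
      (insert (bipSym2 a) (T.image bipSym2)).erase (bipSym2 b) := by
    rw [Finset.image_erase bipSym2_injective, Finset.image_insert]
  have him2 : ((insert b T').erase a).image bipSym2 =
      (insert (bipSym2 b) (T'.image bipSym2)).erase (bipSym2 a) := by
    rw [Finset.image_erase bipSym2_injective, Finset.image_insert]
  refine ⟨b, hbT, hbT', ⟨?_, ?_⟩, ⟨?_, ?_⟩⟩
  · intro p hp
    rcases Finset.mem_insert.mp (Finset.mem_of_mem_erase hp) with rfl | hp'
    · exact hT'.1 _ ha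
    · exact hT.1 _ hp'
  · rw [him1]; exact htree1
  · intro p hp
    rcases Finset.mem_insert.mp (Finset.mem_of_mem_erase hp) with rfl | hp'
    · exact hT.1 _ hbT
    · exact hT'.1 _ hp'
  · rw [him2]; exact htree2

lemma represents_swap (T : Finset (E × V)) (h : E → ℤ) (hrep : Represents T h)
    {a b : E × V} (ha : a ∉ T) (hb : b ∈ T) :
    Represents ((insert a T).erase b)
      (fun x => h x + (if x = a.1 then 1 else 0) - (if x = b.1 then 1 else 0)) := by
  have hab : a ≠ b := fun hc => ha (hc ▸ hb)
  intro e
  have hc0 := hrep e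
  have hanotc : a ∉ T.filter (fun p => p.1 = e) := fun hc => ha (Finset.mem_filter.mp hc).1
  rw [Finset.filter_erase, Finset.filter_insert]
  by_cases hae : a.1 = e <;> by_cases hbe : b.1 = e
  · rw [if_pos hae,
      Finset.card_erase_of_mem
        (Finset.mem_insert_of_mem (Finset.mem_filter.mpr ⟨hb, hbe⟩)),
      Finset.card_insert_of_notMem hanotc]
    simp only [if_pos hae.symm, if_pos hbe.symm]
    omega
  · rw [if_pos hae,
      Finset.erase_eq_of_notMem (by
        intro hc
        rcases Finset.mem_insert.mp hc with hc1 | hc2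
        · exact hab hc1.symm
        · exact hbe (Finset.mem_filter.mp hc2).2),
      Finset.card_insert_of_notMem hanotc]
    simp only [if_pos hae.symm, if_neg (fun hc => hbe (hc : e = b.1).symm)]
    omega
  · rw [if_neg hae,
      Finset.card_erase_of_mem (Finset.mem_filter.mpr ⟨hb, hbe⟩)]
    have h1 : 1 ≤ (T.filter (fun p => p.1 = e)).card :=
      Finset.card_pos.mpr ⟨b, Finset.mem_filter.mpr ⟨hb, hbe⟩⟩
    simp only [if_neg (fun hc => hae (hc : e = a.1).symm), if_pos hbe.symm]
    omega
  · rw [if_neg hae,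
      Finset.erase_eq_of_notMem (s := T.filter (fun p => p.1 = e)) (a := b)
        (fun hc => hbe (Finset.mem_filter.mp hc).2)]
    simp only [if_neg (fun hc => hae (hc : e = a.1).symm),
      if_neg (fun hc => hbe (hc : e = b.1).symm)]
    omega

lemma exists_new_edge (T T' : Finset (E × V)) (h h' : E → ℤ)
    (hr : Represents T h) (hr' : Represents T' h') {e : E} (hlt : h e < h' e) :
    ∃ a, a ∈ T' ∧ a ∉ T ∧ a.1 = e := by
  have hcard : (T.filter (fun p => p.1 = e)).card < (T'.filter (fun p => p.1 = e)).card := by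
    have h1 := hr e; have h2 := hr' e; omega
  have hns : ¬(T'.filter (fun p => p.1 = e)) ⊆ (T.filter (fun p => p.1 = e)) :=
    fun hc => absurd (Finset.card_le_card hc) (by omega)
  obtain ⟨a, ha1, ha2⟩ := Finset.not_subset.mp hns
  obtain ⟨haT', hae⟩ := Finset.mem_filter.mp ha1
  exact ⟨a, haT', fun hc => ha2 (Finset.mem_filter.mpr ⟨hc, hae⟩), hae⟩

lemma measure_drop (T T' : Finset (E × V)) {a b : E × V}
    (ha : a ∈ T') (han : a ∉ T) (hb : b ∈ T) (hbn : b ∉ T') :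
    ((insert b T').erase a) \ T = (T' \ T).erase a ∧
      T' \ ((insert a T).erase b) = (T' \ T).erase a := by
  constructor
  · rw [Finset.erase_sdiff_comm, Finset.insert_sdiff_of_mem _ hb]
  · ext z
    simp only [Finset.mem_sdiff, Finset.mem_erase, Finset.mem_insert]
    constructor
    · rintro ⟨hz1, hz2⟩
      have hzb : z ≠ b := fun hc => hbn (hc ▸ hz1)
      refine ⟨fun hc => hz2 ⟨hzb, Or.inl hc⟩, hz1, fun hc => hz2 ⟨hzb, Or.inr hc⟩⟩
    · rintro ⟨hz1, hz2, hz3⟩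
      refine ⟨hz2, fun hc => ?_⟩
      rcases hc.2 with rfl | hzT
      · exact hz1 rfl
      · exact hz3 hzT

/-- One-sided exchange axiom (B⁻) for hypertrees. -/
lemma bminus (inc : E → V → Prop) : ∀ (n : ℕ) (T T' : Finset (E × V)) (h h' : E → ℤ),
    (T' \ T).card = n → IsSpanningTreeB inc T → Represents T h →
    IsSpanningTreeB inc T' → Represents T' h' → ∀ e, h e < h' e →
    ∃ f, h' f < h f ∧
      IsHypertree inc (fun x => h' x - (if x = e then 1 else 0) + (if x = f then 1 else 0)) := by
  intro n
  induction n using Nat.strong_induction_on with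
  | _ n ih =>
  intro T T' h h' hcard hT hrT hT' hrT' e hlt
  obtain ⟨a, haT', haT, hae⟩ := exists_new_edge T T' h h' hrT hrT' hlt
  obtain ⟨b, hbT, hbT', htree1, htree2⟩ := spanning_swap inc T T' hT hT' haT' haT
  set T'₁ : Finset (E × V) := (insert b T').erase a with hT'₁def
  have hrT'₁ : Represents T'₁
      (fun x => h' x + (if x = b.1 then 1 else 0) - (if x = e then 1 else 0)) := by
    have := represents_swap T' h' hrT' hbT' haT'
    rwa [hae] at this
  have hm : (T'₁ \ T).card < n := by
    rw [(measure_drop T T' haT' haT hbT hbT').1, Finset.card_erase_of_mem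
      (Finset.mem_sdiff.mpr ⟨haT', haT⟩), ← hcard]
    have : 0 < (T' \ T).card := Finset.card_pos.mpr ⟨a, Finset.mem_sdiff.mpr ⟨haT', haT⟩⟩
    omega
  by_cases hfe : b.1 = e
  · have hrT'₁' : Represents T'₁ h' := by
      intro g
      rw [hrT'₁ g, hfe]
      ring
    exact ih _ hm T T'₁ h h' rfl hT hrT htree2 hrT'₁' e hlt
  by_cases hf : h' b.1 < h b.1
  · refine ⟨b.1, hf, T'₁, htree2, fun g => ?_⟩
    rw [hrT'₁ g]
    ring
  · push_neg at hf
    have hflt : h b.1 < h' b.1 + (if b.1 = b.1 then 1 else 0) - (if b.1 = e then 1 else 0) := by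
      simp [hfe]; omega
    obtain ⟨g, hg1, hg2⟩ := ih _ hm T T'₁ h
      (fun x => h' x + (if x = b.1 then 1 else 0) - (if x = e then 1 else 0))
      rfl hT hrT htree2 hrT'₁ b.1 hflt
    have hge : g ≠ e := by
      intro hge'
      have hne : ¬(e = b.1) := fun hc => hfe hc.symm
      rw [hge'] at hg1
      simp [hne] at hg1
      omega
    have hgf : g ≠ b.1 := by
      intro hgf'
      rw [hgf'] at hg1
      simp [hfe] at hg1
      omega
    have hg' : h' g < h g := by
      simp [hgf, hge] at hg1
      omega
    refine ⟨g, hg', ?_⟩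
    have heq : (fun x => (h' x + (if x = b.1 then 1 else 0) - (if x = e then 1 else 0))
        - (if x = b.1 then 1 else 0) + (if x = g then 1 else 0))
        = (fun x => h' x - (if x = e then 1 else 0) + (if x = g then 1 else 0)) := by
      funext x; ring
    rwa [heq] at hg2

/-- Main exchange lemma, by strong induction on `|T' \ T|`. -/
lemma main_aux (inc : E → V → Prop) : ∀ (n : ℕ) (T T' : Finset (E × V)) (h h' : E → ℤ),
    (T' \ T).card = n → IsSpanningTreeB inc T → Represents T h →
    IsSpanningTreeB inc T' → Represents T' h' → ∀ e, h e < h' e →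
    ∃ f, h' f < h f ∧
      IsHypertree inc (fun x => h x + (if x = e then 1 else 0) - (if x = f then 1 else 0)) ∧
      IsHypertree inc (fun x => h' x - (if x = e then 1 else 0) + (if x = f then 1 else 0)) := by
  intro n
  induction n using Nat.strong_induction_on with
  | _ n ih =>
  intro T T' h h' hcard hT hrT hT' hrT' e hlt
  obtain ⟨a, haT', haT, hae⟩ := exists_new_edge T T' h h' hrT hrT' hlt
  obtain ⟨b, hbT, hbT', htree1, htree2⟩ := spanning_swap inc T T' hT hT' haT' haT
  set T₁ : Finset (E × V) := (insert a T).erase b with hT₁def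
  set T'₁ : Finset (E × V) := (insert b T').erase a with hT'₁def
  have hrT₁ : Represents T₁
      (fun x => h x + (if x = e then 1 else 0) - (if x = b.1 then 1 else 0)) := by
    have := represents_swap T h hrT haT hbT
    rwa [hae] at this
  have hrT'₁ : Represents T'₁
      (fun x => h' x + (if x = b.1 then 1 else 0) - (if x = e then 1 else 0)) := by
    have := represents_swap T' h' hrT' hbT' haT'
    rwa [hae] at this
  have hm : (T' \ T₁).card < n := by
    rw [(measure_drop T T' haT' haT hbT hbT').2, Finset.card_erase_of_mem
      (Finset.mem_sdiff.mpr ⟨haT', haT⟩), ← hcard]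
    have : 0 < (T' \ T).card := Finset.card_pos.mpr ⟨a, Finset.mem_sdiff.mpr ⟨haT', haT⟩⟩
    omega
  by_cases hfe : b.1 = e
  · -- same degree vector; recurse with smaller symmetric difference
    have hrT₁' : Represents T₁ h := by
      intro g
      rw [hrT₁ g, hfe]
      ring
    exact ih _ hm T₁ T' h h' rfl htree1 hrT₁' hT' hrT' e hlt
  by_cases hf : h' b.1 < h b.1
  · -- direct exchange works
    refine ⟨b.1, hf, ⟨T₁, htree1, hrT₁⟩, T'₁, htree2, fun g => ?_⟩
    rw [hrT'₁ g]
    ring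
  · push_neg at hf
    have hflt : (fun x => h x + (if x = e then 1 else 0) - (if x = b.1 then 1 else 0)) b.1
        < h' b.1 := by
      simp [hfe]; omega
    obtain ⟨g, hg1, hgA, hgB⟩ := ih _ hm T₁ T'
      (fun x => h x + (if x = e then 1 else 0) - (if x = b.1 then 1 else 0)) h'
      rfl htree1 hrT₁ hT' hrT' b.1 hflt
    have hge : g ≠ e := by
      intro hge'
      rw [hge'] at hg1
      simp [fun hc => hfe (hc : e = b.1).symm] at hg1
      omega
    have hgf : g ≠ b.1 := by
      intro hgf'
      rw [hgf'] at hg1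
      simp [hfe] at hg1
      omega
    have hg' : h' g < h g := by
      simp [hge, hgf] at hg1
      omega
    -- first membership
    have hAmem : IsHypertree inc
        (fun x => h x + (if x = e then 1 else 0) - (if x = g then 1 else 0)) := by
      have heq : (fun x => (h x + (if x = e then 1 else 0) - (if x = b.1 then 1 else 0))
          + (if x = b.1 then 1 else 0) - (if x = g then 1 else 0))
          = (fun x => h x + (if x = e then 1 else 0) - (if x = g then 1 else 0)) := by
        funext x; ring
      rwa [heq] at hgA
    -- second membership via the one-sided exchange applied to two derived hypertrees
    obtain ⟨Tu, hTu, hru⟩ := hgB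
    have hee : ¬(e = b.1) := fun hc => hfe hc.symm
    have heg : ¬(e = g) := fun hc => hge hc.symm
    have hwu : (fun x => h' x + (if x = b.1 then 1 else 0) - (if x = e then 1 else 0)) e
        < (fun x => h' x - (if x = b.1 then 1 else 0) + (if x = g then 1 else 0)) e := by
      simp [hee, heg]
    obtain ⟨p, hp1, hp2⟩ := bminus inc ((Tu \ T'₁).card) T'₁ Tu
      (fun x => h' x + (if x = b.1 then 1 else 0) - (if x = e then 1 else 0))
      (fun x => h' x - (if x = b.1 then 1 else 0) + (if x = g then 1 else 0))
      rfl htree2 hrT'₁ hTu hru e hwu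
    have hpb : p = b.1 := by
      by_contra hpb
      by_cases hpg : p = g <;> by_cases hpe : p = e <;>
        simp [hpb, hpg, hpe, hgf, hge, hee, heg] at hp1 <;> omega
    rw [hpb] at hp2
    have hBmem : IsHypertree inc
        (fun x => h' x - (if x = e then 1 else 0) + (if x = g then 1 else 0)) := by
      have heq : (fun x => (h' x - (if x = b.1 then 1 else 0) + (if x = g then 1 else 0))
          - (if x = e then 1 else 0) + (if x = b.1 then 1 else 0))
          = (fun x => h' x - (if x = e then 1 else 0) + (if x = g then 1 else 0)) := by
        funext x; ring
      rwa [heq] at hp2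
    exact ⟨g, hg', hAmem, hBmem⟩

/-- Exchange property of hypertrees: the hypertrees of a connected hypergraph form the
bases of an integer polymatroid. -/
theorem hypertree_exchange (inc : E → V → Prop) (hconn : (bipGraph inc).Connected)
    (h h' : E → ℤ) (hh : IsHypertree inc h) (hh' : IsHypertree inc h')
    (e : E) (he : h e < h' e) :
    ∃ f : E, h' f < h f ∧
      IsHypertree inc
        (fun x => h x + (if x = e then 1 else 0) - (if x = f then 1 else 0)) ∧
      IsHypertree inc
        (fun x => h' x - (if x = e then 1 else 0) + (if x = f then 1 else 0)) := by
  obtain ⟨T, hT, hrT⟩ := hh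
  obtain ⟨T', hT', hrT'⟩ := hh'
  exact main_aux inc ((T' \ T).card) T T' h h' rfl hT hrT hT' hrT' e he
end

section
/- Let P ⊂ Z^E be an integer polymatroid and c ∈ Z^E. Then there exists a basis b ∈ P simultaneously minimizing d₁^<(·,c) and d₁^>(·,c); consequently d₁(P,c) = d₁^<(P,c) + d₁^>(P,c), and any b' ∈ P with d₁(b',c) = d₁(P,c) satisfies d₁^<(b',c) = d₁^<(P,c) and d₁^>(b',c) = d₁^>(P,c). -/
variable {E : Type*} [Fintype E] [DecidableEq E]

/-- `P ⊂ ℤ^E` is (the set of bases of) an integer polymatroid: a nonempty finite set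
satisfying the exchange axiom. -/
def IsPolymatroid (P : Set (E → ℤ)) : Prop :=
  P.Nonempty ∧ P.Finite ∧
    ∀ b ∈ P, ∀ b' ∈ P, ∀ e : E, b e < b' e →
      ∃ f : E, b' f < b f ∧
        (fun x => b x + (if x = e then 1 else 0) - (if x = f then 1 else 0)) ∈ P ∧
        (fun x => b' x - (if x = e then 1 else 0) + (if x = f then 1 else 0)) ∈ P

/-- Manhattan distance `d₁(b,c) = Σ_e |b e − c e|`. -/
def d1 (b c : E → ℤ) : ℕ := ∑ x : E, (b x - c x).natAbs

/-- One-sided deviation `d₁^<(b,c) = Σ_e max(0, c e − b e)` (the corank of `c`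
relative to `b`). -/
def dLt (b c : E → ℤ) : ℕ := ∑ x : E, (c x - b x).toNat

/-- One-sided deviation `d₁^>(b,c) = Σ_e max(0, b e − c e)` (the nullity of `c`
relative to `b`). -/
def dGt (b c : E → ℤ) : ℕ := ∑ x : E, (b x - c x).toNat

lemma split_sum {e f : E} (hef : e ≠ f) (A : E → ℕ) :
    ∑ x, A x = A e + A f + ∑ x ∈ (Finset.univ.erase e).erase f, A x := by
  rw [← Finset.add_sum_erase _ A (Finset.mem_univ e),
      ← Finset.add_sum_erase _ A (Finset.mem_erase.mpr ⟨hef.symm, Finset.mem_univ f⟩)]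
  ring

lemma keysub {e f : E} (hef : e ≠ f) (A B : E → ℕ)
    (hAB : ∀ x, x ≠ e → x ≠ f → A x = B x) :
    (∑ x, A x) + (B e + B f) = (∑ x, B x) + (A e + A f) := by
  rw [split_sum hef A, split_sum hef B,
    Finset.sum_congr rfl (fun x hx => by
      have h1 := Finset.mem_erase.mp hx
      have h2 := Finset.mem_erase.mp h1.2
      exact hAB x h2.1 h1.1)]
  ring

lemma min_d1_min_dLt (P : Set (E → ℤ)) (hP : IsPolymatroid P) (c : E → ℤ)
    (b : E → ℤ) (hb : b ∈ P) (hmin : ∀ b' ∈ P, d1 b c ≤ d1 b' c) :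
    ∀ b' ∈ P, dLt b c ≤ dLt b' c := by
  obtain ⟨-, -, hex⟩ := hP
  suffices h : ∀ n : ℕ, ∀ b' ∈ P, d1 b' b ≤ n → dLt b c ≤ dLt b' c by
    intro b' hb'; exact h (d1 b' b) b' hb' le_rfl
  intro n
  induction n using Nat.strong_induction_on with
  | _ n IH =>
  intro b' hb' hn
  by_contra hlt
  push_neg at hlt
  simp only [dLt] at hlt
  obtain ⟨e, -, he⟩ : ∃ e ∈ Finset.univ, (c e - b' e).toNat < (c e - b e).toNat :=
    Finset.exists_lt_of_sum_lt hlt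
  have he1 : b e < b' e := by omega
  have he2 : b e < c e := by omega
  obtain ⟨f, hf, hb1, hb'1⟩ := hex b hb b' hb' e he1
  have hef : e ≠ f := fun h => by subst h; omega
  set B1 : E → ℤ := fun x => b x + (if x = e then 1 else 0) - (if x = f then 1 else 0) with hB1
  set B' : E → ℤ := fun x => b' x - (if x = e then 1 else 0) + (if x = f then 1 else 0) with hB'
  have hB1e : B1 e = b e + 1 := by simp [hB1, hef]
  have hB1f : B1 f = b f - 1 := by simp [hB1, hef.symm]
  have hB'e : B' e = b' e - 1 := by simp [hB', hef]
  have hB'f : B' f = b' f + 1 := by simp [hB', hef.symm]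
  -- from minimality of b : b f ≤ c f
  have hmin1 := hmin B1 hb1
  simp only [d1] at hmin1
  have hk1 := keysub hef (fun x => (B1 x - c x).natAbs) (fun x => (b x - c x).natAbs)
    (fun x h1 h2 => by simp [hB1, h1, h2])
  rw [hB1e, hB1f] at hk1
  have hbf : b f ≤ c f := by omega
  have hfc : b' f < c f := by omega
  -- dLt B' c ≤ dLt b' c
  have hk2 := keysub hef (fun x => (c x - B' x).toNat) (fun x => (c x - b' x).toNat)
    (fun x h1 h2 => by simp [hB', h1, h2])
  rw [hB'e, hB'f] at hk2
  have hL : dLt B' c ≤ dLt b' c := by simp only [dLt]; omega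
  -- d1 B' b < d1 b' b
  have hk3 := keysub hef (fun x => (B' x - b x).natAbs) (fun x => (b' x - b x).natAbs)
    (fun x h1 h2 => by simp [hB', h1, h2])
  rw [hB'e, hB'f] at hk3
  have hd1 : d1 B' b < d1 b' b := by simp only [d1]; omega
  have hIH := IH (d1 B' b) (lt_of_lt_of_le hd1 hn) B' hb'1 le_rfl
  have : dLt b c ≤ dLt b' c := le_trans hIH hL
  simp only [dLt] at this
  omega

lemma min_d1_min_dGt (P : Set (E → ℤ)) (hP : IsPolymatroid P) (c : E → ℤ)
    (b : E → ℤ) (hb : b ∈ P) (hmin : ∀ b' ∈ P, d1 b c ≤ d1 b' c) :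
    ∀ b' ∈ P, dGt b c ≤ dGt b' c := by
  obtain ⟨-, -, hex⟩ := hP
  suffices h : ∀ n : ℕ, ∀ b' ∈ P, d1 b' b ≤ n → dGt b c ≤ dGt b' c by
    intro b' hb'; exact h (d1 b' b) b' hb' le_rfl
  intro n
  induction n using Nat.strong_induction_on with
  | _ n IH =>
  intro b' hb' hn
  by_contra hlt
  push_neg at hlt
  simp only [dGt] at hlt
  obtain ⟨e, -, he⟩ : ∃ e ∈ Finset.univ, (b' e - c e).toNat < (b e - c e).toNat :=
    Finset.exists_lt_of_sum_lt hlt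
  have he1 : b' e < b e := by omega
  have he2 : c e < b e := by omega
  obtain ⟨f, hf, hb'1, hb1⟩ := hex b' hb' b hb e he1
  have hef : e ≠ f := fun h => by subst h; omega
  set B1 : E → ℤ := fun x => b x - (if x = e then 1 else 0) + (if x = f then 1 else 0) with hB1
  set B' : E → ℤ := fun x => b' x + (if x = e then 1 else 0) - (if x = f then 1 else 0) with hB'
  have hB1e : B1 e = b e - 1 := by simp [hB1, hef]
  have hB1f : B1 f = b f + 1 := by simp [hB1, hef.symm]
  have hB'e : B' e = b' e + 1 := by simp [hB', hef]
  have hB'f : B' f = b' f - 1 := by simp [hB', hef.symm]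
  -- from minimality of b : c f ≤ b f
  have hmin1 := hmin B1 hb1
  simp only [d1] at hmin1
  have hk1 := keysub hef (fun x => (B1 x - c x).natAbs) (fun x => (b x - c x).natAbs)
    (fun x h1 h2 => by simp [hB1, h1, h2])
  rw [hB1e, hB1f] at hk1
  have hbf : c f ≤ b f := by omega
  have hfc : c f < b' f := by omega
  -- dGt B' c ≤ dGt b' c
  have hk2 := keysub hef (fun x => (B' x - c x).toNat) (fun x => (b' x - c x).toNat)
    (fun x h1 h2 => by simp [hB', h1, h2])
  rw [hB'e, hB'f] at hk2
  have hL : dGt B' c ≤ dGt b' c := by simp only [dGt]; omega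
  -- d1 B' b < d1 b' b
  have hk3 := keysub hef (fun x => (B' x - b x).natAbs) (fun x => (b' x - b x).natAbs)
    (fun x h1 h2 => by simp [hB', h1, h2])
  rw [hB'e, hB'f] at hk3
  have hd1 : d1 B' b < d1 b' b := by simp only [d1]; omega
  have hIH := IH (d1 B' b) (lt_of_lt_of_le hd1 hn) B' hb'1 le_rfl
  have : dGt b c ≤ dGt b' c := le_trans hIH hL
  simp only [dGt] at this
  omega

/-- There is a basis simultaneously minimizing `d₁^<(·,c)` and `d₁^>(·,c)`; it also
minimizes `d₁(·,c)` and satisfies `d₁ = d₁^< + d₁^>`, and every minimizer of `d₁(·,c)`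
attains the minima of `d₁^<(·,c)` and `d₁^>(·,c)`. -/
theorem simultaneous_minimizer (P : Set (E → ℤ)) (hP : IsPolymatroid P) (c : E → ℤ) :
    ∃ b ∈ P, (∀ b' ∈ P, dLt b c ≤ dLt b' c) ∧ (∀ b' ∈ P, dGt b c ≤ dGt b' c) ∧
      (∀ b' ∈ P, d1 b c ≤ d1 b' c) ∧ d1 b c = dLt b c + dGt b c ∧
      ∀ b' ∈ P, (∀ b'' ∈ P, d1 b' c ≤ d1 b'' c) →
        dLt b' c = dLt b c ∧ dGt b' c = dGt b c := by
  obtain ⟨b, hb, hmin⟩ := Set.exists_min_image P (fun b => d1 b c) hP.2.1 hP.1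
  have hA := min_d1_min_dLt P hP c b hb hmin
  have hB := min_d1_min_dGt P hP c b hb hmin
  have hsum : ∀ b0 : E → ℤ, d1 b0 c = dLt b0 c + dGt b0 c := by
    intro b0
    simp only [d1, dLt, dGt, ← Finset.sum_add_distrib]
    exact Finset.sum_congr rfl (fun x _ => by omega)
  refine ⟨b, hb, hA, hB, hmin, hsum b, ?_⟩
  intro b' hb' hmin'
  have hA' := min_d1_min_dLt P hP c b' hb' hmin'
  have hB' := min_d1_min_dGt P hP c b' hb' hmin'
  exact ⟨le_antisymm (hA' b hb) (hA b' hb'), le_antisymm (hB' b hb) (hB b' hb')⟩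
end

section
/- Let P ⊂ Z^E be an integer polymatroid, < a linear order on E, and for each basis b ∈ P define the Crapo interval C_<(b) = {y ∈ Z^E : (y(e) > b(e) ⇒ e is externally active for b) and (y(e) < b(e) ⇒ e is internally active for b)}. Then for distinct bases b₁, b₂ ∈ P, the Crapo intervals C_<(b₁) and C_<(b₂) are disjoint. -/
variable {E : Type*} [Fintype E] [DecidableEq E]

/-- `e` is internally active for the basis `b` with respect to the strict order `lt`:
`b − 1_e + 1_f` is not a basis for any `f` with `lt f e`. -/
def IntActive (P : Set (E → ℤ)) (lt : E → E → Prop) (b : E → ℤ) (e : E) : Prop :=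
  ∀ f, lt f e →
    (fun x => b x - (if x = e then 1 else 0) + (if x = f then 1 else 0)) ∉ P

/-- `e` is externally active for the basis `b` with respect to the strict order `lt`:
`b + 1_e − 1_f` is not a basis for any `f` with `lt f e`. -/
def ExtActive (P : Set (E → ℤ)) (lt : E → E → Prop) (b : E → ℤ) (e : E) : Prop :=
  ∀ f, lt f e →
    (fun x => b x + (if x = e then 1 else 0) - (if x = f then 1 else 0)) ∉ P

/-- The Crapo interval of the basis `b` with respect to the strict order `lt`. -/
def CrapoInterval (P : Set (E → ℤ)) (lt : E → E → Prop) (b : E → ℤ) : Set (E → ℤ) :=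
  {y | ∀ e : E, (b e < y e → ExtActive P lt b e) ∧ (y e < b e → IntActive P lt b e)}

/-- Crapo intervals of distinct bases of an integer polymatroid are disjoint. -/
theorem crapo_intervals_disjoint (P : Set (E → ℤ)) (hP : IsPolymatroid P)
    (lt : E → E → Prop) (hlt : IsStrictTotalOrder E lt)
    (b₁ b₂ : E → ℤ) (hb₁ : b₁ ∈ P) (hb₂ : b₂ ∈ P) (hne : b₁ ≠ b₂) :
    Disjoint (CrapoInterval P lt b₁) (CrapoInterval P lt b₂) := by
  haveI := hlt
  rw [Set.disjoint_left]
  intro y hy1 hy2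
  have key : ∀ c₁ ∈ P, ∀ c₂ ∈ P, y ∈ CrapoInterval P lt c₁ → y ∈ CrapoInterval P lt c₂ →
      ∀ e : E, c₁ e < c₂ e → (∀ f, c₁ f ≠ c₂ f → ¬ lt f e) → False := by
    intro c₁ hc₁ c₂ hc₂ hy1 hy2 e he hmin
    obtain ⟨f, hf, hm1, hm2⟩ := hP.2.2 c₁ hc₁ c₂ hc₂ e he
    have hfe : lt e f := by
      rcases trichotomous_of lt e f with h | h | h
      · exact h
      · subst h; omega
      · exact absurd h (hmin f (ne_of_gt hf))
    rcases lt_or_ge (y f) (c₁ f) with h | h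
    · have hia := (hy1 f).2 h e hfe
      refine hia ?_
      convert hm1 using 1
      funext x; ring
    · have h2 : c₂ f < y f := lt_of_lt_of_le hf h
      have hea := (hy2 f).1 h2 e hfe
      refine hea ?_
      convert hm2 using 1
      funext x; ring
  have hwf : WellFounded lt := Finite.wellFounded_of_trans_of_irrefl lt
  obtain ⟨e, heS, hemin⟩ := hwf.has_min {g | b₁ g ≠ b₂ g} (Function.ne_iff.mp hne)
  rcases (heS : b₁ e ≠ b₂ e).lt_or_gt with h | h
  · exact key b₁ hb₁ b₂ hb₂ hy1 hy2 e h (fun f hf => hemin f hf)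
  · exact key b₂ hb₂ b₁ hb₁ hy2 hy1 e h (fun f hf => hemin f (Ne.symm hf))
end

section
/- Let P ⊂ Z^E be an integer polymatroid with a fixed linear order < on E. Then every c ∈ Z^E lies in the Crapo interval C_<(b) of some basis b ∈ P, and moreover this b satisfies d₁(b,c) = d₁(P,c). Combined with disjointness, the Crapo intervals {C_<(b) : b ∈ P} partition Z^E. -/
variable {E : Type*} [Fintype E] [DecidableEq E]

section Aux

lemma sum_two_shift {F F' : E → ℤ} {e f : E} (hef : e ≠ f)
    (h : ∀ x, x ≠ e → x ≠ f → F' x = F x) :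
    ∑ x : E, F' x = ∑ x : E, F x + (F' e - F e) + (F' f - F f) := by
  have hz : ∀ x ∈ (Finset.univ : Finset E), x ∉ ({e, f} : Finset E) → F' x - F x = 0 := by
    intro x _ hx
    simp only [Finset.mem_insert, Finset.mem_singleton, not_or] at hx
    rw [h x hx.1 hx.2]; ring
  have key : ∑ x : E, (F' x - F x) = (F' e - F e) + (F' f - F f) := by
    rw [← Finset.sum_subset (Finset.subset_univ ({e, f} : Finset E)) hz,
      Finset.sum_pair hef]
  have h2 : ∑ x : E, (F' x - F x) = ∑ x : E, F' x - ∑ x : E, F x :=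
    Finset.sum_sub_distrib _ _
  linarith

lemma move_est (w : E → ℕ) (c b b' : E → ℤ) (e f : E) (hef : e ≠ f)
    (hagree : ∀ x, x ≠ e → x ≠ f → b' x = b x)
    (he : (b' e - c e).natAbs + 1 = (b e - c e).natAbs)
    (hf : (b' f - c f).natAbs ≤ (b f - c f).natAbs + 1) :
    d1 b' c ≤ d1 b c ∧ (d1 b c ≤ d1 b' c → w f < w e →
      ∑ x : E, w x * (b' x - c x).natAbs < ∑ x : E, w x * (b x - c x).natAbs) := by
  classical
  set A : E → ℤ := fun x => |b x - c x| with hA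
  set A' : E → ℤ := fun x => |b' x - c x| with hA'
  have hag : ∀ x, x ≠ e → x ≠ f → A' x = A x := by
    intro x h1 h2; simp only [hA, hA', hagree x h1 h2]
  have hsum : ∑ x : E, A' x = ∑ x : E, A x + (A' e - A e) + (A' f - A f) :=
    sum_two_shift hef hag
  have hd1' : (d1 b' c : ℤ) = ∑ x : E, A' x := by
    unfold d1; push_cast; rfl
  have hd1 : (d1 b c : ℤ) = ∑ x : E, A x := by
    unfold d1; push_cast; rfl
  have heZ : A' e + 1 = A e := by simp only [hA, hA', Int.abs_eq_natAbs]; exact_mod_cast he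
  have hfZ : A' f ≤ A f + 1 := by simp only [hA, hA', Int.abs_eq_natAbs]; exact_mod_cast hf
  constructor
  · have : (d1 b' c : ℤ) ≤ (d1 b c : ℤ) := by rw [hd1', hd1]; linarith
    exact_mod_cast this
  · intro hge hwf
    have hgeZ : (d1 b c : ℤ) ≤ (d1 b' c : ℤ) := by exact_mod_cast hge
    have hAf : A' f = A f + 1 := by
      rw [hd1', hd1] at hgeZ; linarith
    set W : E → ℤ := fun x => (w x : ℤ) * A x with hW
    set W' : E → ℤ := fun x => (w x : ℤ) * A' x with hW'
    have hagW : ∀ x, x ≠ e → x ≠ f → W' x = W x := by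
      intro x h1 h2; simp only [hW, hW', hag x h1 h2]
    have hsumW : ∑ x : E, W' x = ∑ x : E, W x + (W' e - W e) + (W' f - W f) :=
      sum_two_shift hef hagW
    have hWe : W' e - W e = -(w e : ℤ) := by
      simp only [hW, hW']; rw [show A' e = A e - 1 by linarith]; ring
    have hWf : W' f - W f = (w f : ℤ) := by
      simp only [hW, hW']; rw [hAf]; ring
    have hwfZ : (w f : ℤ) < (w e : ℤ) := by exact_mod_cast hwf
    have hZ : (↑(∑ x : E, w x * (b' x - c x).natAbs) : ℤ) <
        ↑(∑ x : E, w x * (b x - c x).natAbs) := by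
      push_cast
      calc ∑ x : E, (w x : ℤ) * |b' x - c x| = ∑ x : E, W' x := rfl
        _ = ∑ x : E, W x + (W' e - W e) + (W' f - W f) := hsumW
        _ < ∑ x : E, W x := by rw [hWe, hWf]; linarith
        _ = ∑ x : E, (w x : ℤ) * |b x - c x| := rfl
    exact_mod_cast hZ

end Aux

/-- Every `c ∈ ℤ^E` lies in the Crapo interval of some basis `b`, which moreover
minimizes the Manhattan distance to `c`; combined with disjointness (the second
conjunct), the Crapo intervals partition `ℤ^E`. -/
theorem crapo_intervals_cover (P : Set (E → ℤ)) (hP : IsPolymatroid P)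
    (lt : E → E → Prop) (hlt : IsStrictTotalOrder E lt) (c : E → ℤ) :
    (∃ b ∈ P, c ∈ CrapoInterval P lt b ∧ ∀ b' ∈ P, d1 b c ≤ d1 b' c) ∧
    (∀ b₁ ∈ P, ∀ b₂ ∈ P, c ∈ CrapoInterval P lt b₁ → c ∈ CrapoInterval P lt b₂ →
      b₁ = b₂) := by
  classical
  obtain ⟨hne, hfin, hex⟩ := hP
  haveI := hlt
  set w : E → ℕ := fun e => (Finset.univ.filter (fun f => lt f e)).card with hw
  have hwmono : ∀ f e, lt f e → w f < w e := by
    intro f e hfe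
    apply Finset.card_lt_card
    constructor
    · intro x hx
      simp only [Finset.mem_filter, Finset.mem_univ, true_and] at hx ⊢
      exact _root_.trans hx hfe
    · intro hsub
      have hmem : f ∈ Finset.univ.filter (fun g => lt g e) := by simp [hfe]
      have := hsub hmem
      simp only [Finset.mem_filter, Finset.mem_univ, true_and] at this
      exact irrefl_of lt f this
  constructor
  · -- existence
    obtain ⟨b0, hb0, hb0min⟩ := (hfin.toFinset).exists_min_image (fun b => d1 b c)
      (hfin.toFinset_nonempty.mpr hne)
    set S : Finset (E → ℤ) := hfin.toFinset.filter (fun b => d1 b c = d1 b0 c) with hS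
    have hSne : S.Nonempty := ⟨b0, by simp [hS, hb0]⟩
    obtain ⟨b, hbS, hbmin⟩ :=
      S.exists_min_image (fun b => ∑ x : E, w x * (b x - c x).natAbs) hSne
    have hbP : b ∈ P := by
      have := hbS; simp only [hS, Finset.mem_filter, Set.Finite.mem_toFinset] at this
      exact this.1
    have hbd : d1 b c = d1 b0 c := by
      have := hbS; simp only [hS, Finset.mem_filter] at this; exact this.2
    have hmin : ∀ b' ∈ P, d1 b c ≤ d1 b' c := by
      intro b' hb'; rw [hbd]; exact hb0min b' (hfin.mem_toFinset.mpr hb')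
    refine ⟨b, hbP, ?_, hmin⟩
    intro e
    have generic : ∀ b' : E → ℤ, b' ∈ P → ∀ f : E, lt f e →
        (b' e - c e).natAbs + 1 = (b e - c e).natAbs →
        (∀ x, x ≠ e → x ≠ f → b' x = b x) →
        (b' f - c f).natAbs ≤ (b f - c f).natAbs + 1 → False := by
      intro b' hb'P f hfe hhe hagr hhf
      have hef : e ≠ f := fun h => irrefl_of lt e (h ▸ hfe)
      obtain ⟨hle, hstrict⟩ := move_est w c b b' e f hef hagr hhe hhf
      have hge : d1 b c ≤ d1 b' c := hmin b' hb'P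
      have hb'S : b' ∈ S := by
        simp only [hS, Finset.mem_filter, Set.Finite.mem_toFinset]
        exact ⟨hb'P, le_antisymm (le_trans hle (le_of_eq hbd))
          (hb0min b' (hfin.mem_toFinset.mpr hb'P))⟩
      have h1 := hbmin b' hb'S
      have h2 := hstrict hge (hwmono f e hfe)
      omega
    constructor
    · intro hbe f hfe hmem
      set b' : E → ℤ :=
        fun x => b x + (if x = e then 1 else 0) - (if x = f then 1 else 0) with hb'
      have hef : e ≠ f := fun h => irrefl_of lt e (h ▸ hfe)
      refine generic b' hmem f hfe ?_ ?_ ?_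
      · have h1 : b' e = b e + 1 := by simp [hb', if_neg hef]
        rw [h1]; omega
      · intro x hx1 hx2; simp [hb', if_neg hx1, if_neg hx2]
      · have h1 : b' f = b f - 1 := by simp [hb', if_neg (Ne.symm hef)]
        rw [h1]; omega
    · intro hce f hfe hmem
      set b' : E → ℤ :=
        fun x => b x - (if x = e then 1 else 0) + (if x = f then 1 else 0) with hb'
      have hef : e ≠ f := fun h => irrefl_of lt e (h ▸ hfe)
      refine generic b' hmem f hfe ?_ ?_ ?_
      · have h1 : b' e = b e - 1 := by simp [hb', if_neg hef]
        rw [h1]; omega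
      · intro x hx1 hx2; simp [hb', if_neg hx1, if_neg hx2]
      · have h1 : b' f = b f + 1 := by simp [hb', if_neg (Ne.symm hef)]
        rw [h1]; omega
  · -- disjointness
    intro b₁ hb₁ b₂ hb₂ hc₁ hc₂
    by_contra hne12
    have hDex : ∃ x, b₁ x ≠ b₂ x := by
      by_contra hall; push_neg at hall; exact hne12 (funext hall)
    obtain ⟨x0, hx0⟩ := hDex
    have hD : (Finset.univ.filter (fun x => b₁ x ≠ b₂ x)).Nonempty :=
      ⟨x0, by simp [hx0]⟩
    obtain ⟨e, heD, hemin⟩ :=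
      (Finset.univ.filter (fun x => b₁ x ≠ b₂ x)).exists_min_image w hD
    have hminlt : ∀ x, lt x e → b₁ x = b₂ x := by
      intro x hxe; by_contra hx
      have hxD : x ∈ Finset.univ.filter (fun x => b₁ x ≠ b₂ x) := by simp [hx]
      have h1 := hemin x hxD
      have h2 := hwmono x e hxe
      omega
    have hbe : b₁ e ≠ b₂ e := by
      simpa using heD
    have key : ∀ a b : E → ℤ, a ∈ P → b ∈ P → c ∈ CrapoInterval P lt a →
        c ∈ CrapoInterval P lt b → (∀ x, lt x e → a x = b x) → a e < b e → False := by
      intro a b haP hbP hca hcb hmn hab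
      obtain ⟨f, hf, h1, h2⟩ := hex a haP b hbP e hab
      have hfe : f ≠ e := by rintro rfl; omega
      have hnlt : ¬ lt f e := fun h => by have := hmn f h; omega
      have hef : lt e f := by
        rcases trichotomous_of lt e f with h | h | h
        · exact h
        · exact absurd h.symm hfe
        · exact absurd h hnlt
      by_cases hcf : c f < a f
      · have heq : (fun x => a x - (if x = f then (1:ℤ) else 0) +
            (if x = e then 1 else 0)) =
            (fun x => a x + (if x = e then (1:ℤ) else 0) -
            (if x = f then 1 else 0)) := by
          funext x; ring
        exact (hca f).2 hcf e hef (heq ▸ h1)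
      · push_neg at hcf
        have hbcf : b f < c f := lt_of_lt_of_le hf hcf
        have heq : (fun x => b x + (if x = f then (1:ℤ) else 0) -
            (if x = e then 1 else 0)) =
            (fun x => b x - (if x = e then (1:ℤ) else 0) +
            (if x = f then 1 else 0)) := by
          funext x; ring
        exact (hcb f).1 hbcf e hef (heq ▸ h2)
    rcases lt_trichotomy (b₁ e) (b₂ e) with h | h | h
    · exact key b₁ b₂ hb₁ hb₂ hc₁ hc₂ hminlt h
    · exact hbe h
    · exact key b₂ b₁ hb₂ hb₁ hc₂ hc₁ (fun x hx => (hminlt x hx).symm) h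
end

section
/- Let P ⊂ Z^E be an integer polymatroid, c ∈ Z^E, b ∈ P with c ∈ C_<(b) for the Crapo interval with respect to a linear order <, so that d₁(b,c) = d₁(P,c). Then the corank-nullity generating function decomposes: Σ_{y ∈ C_<(b)} u^{d₁^>(b,y)} v^{d₁^<(b,y)} = (1/(1−u))^{oi(b)} (1/(1−v))^{oe(b)} (1/(1−u) + 1/(1−v) − 1)^{ie(b)} as formal power series, where oi(b), oe(b), ie(b) count only-internally-active, only-externally-active, and both-active elements of b. -/
variable {E : Type*} [Fintype E] [DecidableEq E]

/-- The number of only-internally-active elements of `b`. -/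
noncomputable def oi (P : Set (E → ℤ)) (lt : E → E → Prop) (b : E → ℤ) : ℕ :=
  Set.ncard {e : E | IntActive P lt b e ∧ ¬ ExtActive P lt b e}

/-- The number of only-externally-active elements of `b`. -/
noncomputable def oe (P : Set (E → ℤ)) (lt : E → E → Prop) (b : E → ℤ) : ℕ :=
  Set.ncard {e : E | ExtActive P lt b e ∧ ¬ IntActive P lt b e}

/-- The number of elements of `b` that are both internally and externally active. -/
noncomputable def ie (P : Set (E → ℤ)) (lt : E → E → Prop) (b : E → ℤ) : ℕ :=
  Set.ncard {e : E | IntActive P lt b e ∧ ExtActive P lt b e}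

/-- The formal power series `1/(1−u) = Σ_{i≥0} uⁱ` in the first variable. -/
noncomputable def genU : MvPowerSeries (Fin 2) ℤ :=
  MvPowerSeries.invOfUnit (1 - MvPowerSeries.X (0 : Fin 2) : MvPowerSeries (Fin 2) ℤ) 1

/-- The formal power series `1/(1−v) = Σ_{i≥0} vⁱ` in the second variable. -/
noncomputable def genV : MvPowerSeries (Fin 2) ℤ :=
  MvPowerSeries.invOfUnit (1 - MvPowerSeries.X (1 : Fin 2) : MvPowerSeries (Fin 2) ℤ) 1

open MvPowerSeries Finset

/-- geometric series in variable s -/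
noncomputable def geo (s : Fin 2) : MvPowerSeries (Fin 2) ℤ :=
  fun m => if m (1 - s) = 0 then 1 else 0

lemma coeff_geo (s : Fin 2) (m : Fin 2 →₀ ℕ) :
    MvPowerSeries.coeff (R := ℤ) m (geo s) = if m (1 - s) = 0 then 1 else 0 := rfl

lemma fin2_other (s t : Fin 2) : t = s ∨ t = 1 - s := by fin_cases s <;> fin_cases t <;> simp

lemma fin2_ne (s : Fin 2) : (1 - s) ≠ s := by fin_cases s <;> decide

lemma one_sub_X_mul_geo (s : Fin 2) : (1 - MvPowerSeries.X s) * geo s = 1 := by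
  classical
  ext m
  rw [sub_mul, one_mul, map_sub, MvPowerSeries.X, coeff_monomial_mul, coeff_geo,
    MvPowerSeries.coeff_one]
  by_cases hm1 : m (1 - s) = 0
  · by_cases hms : m s = 0
    · have hm0 : m = 0 := by
        ext t
        rcases fin2_other s t with h | h <;> simp [h, hms, hm1]
      have : ¬ Finsupp.single s 1 ≤ m := by
        rw [Finsupp.single_le_iff, hms]; omega
      simp [hm0, this, hm1]
    · have hle : Finsupp.single s 1 ≤ m := by rw [Finsupp.single_le_iff]; omega
      have hne : m ≠ 0 := fun h => hms (by simp [h])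
      have hsub : ((m - Finsupp.single s 1 : Fin 2 →₀ ℕ)) (1 - s) = 0 := by
        rw [Finsupp.tsub_apply, Finsupp.single_eq_of_ne (fin2_ne s)]; omega
      simp [hle, hne, hm1, coeff_geo, hsub]
  · have hne : m ≠ 0 := fun h => hm1 (by simp [h])
    have hsub : ((m - Finsupp.single s 1 : Fin 2 →₀ ℕ)) (1 - s) ≠ 0 := by
      rw [Finsupp.tsub_apply, Finsupp.single_eq_of_ne (fin2_ne s)]; omega
    simp only [hne, if_false, coeff_geo, hm1, zero_sub, neg_eq_zero, ite_eq_right_iff,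
      Finsupp.single_le_iff]
    intro _
    rw [Finsupp.tsub_apply] at hsub
    rw [Finsupp.tsub_apply, if_neg hsub, mul_zero]

lemma one_sub_X_mul_inv (s : Fin 2) :
    (1 - MvPowerSeries.X s) *
      MvPowerSeries.invOfUnit (1 - MvPowerSeries.X s : MvPowerSeries (Fin 2) ℤ) 1 = 1 := by
  apply MvPowerSeries.mul_invOfUnit
  simp

lemma inv_eq_geo (s : Fin 2) :
    MvPowerSeries.invOfUnit (1 - MvPowerSeries.X s : MvPowerSeries (Fin 2) ℤ) 1 = geo s := by
  have h1 := one_sub_X_mul_geo s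
  have h2 := one_sub_X_mul_inv s
  calc MvPowerSeries.invOfUnit (1 - MvPowerSeries.X s : MvPowerSeries (Fin 2) ℤ) 1
      = ((1 - MvPowerSeries.X s) * geo s) *
        MvPowerSeries.invOfUnit (1 - MvPowerSeries.X s : MvPowerSeries (Fin 2) ℤ) 1 := by
        rw [h1, one_mul]
    _ = geo s * ((1 - MvPowerSeries.X s) *
        MvPowerSeries.invOfUnit (1 - MvPowerSeries.X s : MvPowerSeries (Fin 2) ℤ) 1) := by ring
    _ = geo s := by rw [h2, mul_one]

lemma coeff_genU (m : Fin 2 →₀ ℕ) :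
    MvPowerSeries.coeff (R := ℤ) m genU = if m 1 = 0 then 1 else 0 := by
  rw [genU, inv_eq_geo, coeff_geo]; norm_num

lemma coeff_genV (m : Fin 2 →₀ ℕ) :
    MvPowerSeries.coeff (R := ℤ) m genV = if m 0 = 0 then 1 else 0 := by
  rw [genV, inv_eq_geo, coeff_geo]; norm_num

lemma coeff_mid (m : Fin 2 →₀ ℕ) :
    MvPowerSeries.coeff (R := ℤ) m (genU + genV - 1) = if m 0 = 0 ∨ m 1 = 0 then 1 else 0 := by
  classical
  rw [map_sub, map_add, coeff_genU, coeff_genV, MvPowerSeries.coeff_one]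
  have hm : m = 0 ↔ m 0 = 0 ∧ m 1 = 0 := by
    constructor
    · rintro rfl; simp
    · rintro ⟨h0, h1⟩
      ext t
      rcases fin2_other 0 t with h | h <;> simp [h, h0, h1]
  by_cases h0 : m 0 = 0 <;> by_cases h1 : m 1 = 0 <;> simp [h0, h1, hm]

lemma fin2_finsupp_ext {m m' : Fin 2 →₀ ℕ} (h0 : m 0 = m' 0) (h1 : m 1 = m' 1) : m = m' := by
  ext t
  rcases fin2_other 0 t with h | h
  · simpa [h] using h0
  · rw [show (1 - 0 : Fin 2) = 1 from rfl] at h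
    simpa [h] using h1

lemma ncard_setOf_eq_sum (p : E → Prop) [DecidablePred p] :
    {e : E | p e}.ncard = ∑ e : E, if p e then 1 else 0 := by
  have h : {e : E | p e} = ↑(Finset.univ.filter p) := by ext e; simp
  rw [h, Set.ncard_coe_finset, Finset.card_filter]

lemma key (I X : E → Prop) (b : E → ℤ) (i j : ℕ) :
    ({y ∈ {y : E → ℤ | ∀ e : E, (b e < y e → X e) ∧ (y e < b e → I e)} |
        dGt b y = i ∧ dLt b y = j}.ncard : ℤ) =
      MvPowerSeries.coeff (R := ℤ) (Finsupp.single 0 i + Finsupp.single 1 j)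
        (genU ^ {e : E | I e ∧ ¬ X e}.ncard * genV ^ {e : E | X e ∧ ¬ I e}.ncard *
          (genU + genV - 1) ^ {e : E | I e ∧ X e}.ncard) := by
  classical
  set n : Fin 2 →₀ ℕ := Finsupp.single 0 i + Finsupp.single 1 j with hn
  have hn0 : n 0 = i := by simp [hn, Finsupp.single_apply]
  have hn1 : n 1 = j := by simp [hn, Finsupp.single_apply]
  set F : E → MvPowerSeries (Fin 2) ℤ := fun e =>
    if I e then (if X e then genU + genV - 1 else genU) else (if X e then genV else 1)
    with hF
  -- the per-element admissibility predicate
  set Q : E → (Fin 2 →₀ ℕ) → Prop := fun e m =>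
    (m 0 ≠ 0 → I e) ∧ (m 1 ≠ 0 → X e) ∧ (m 0 = 0 ∨ m 1 = 0) with hQ
  have coeff_F : ∀ e m, MvPowerSeries.coeff (R := ℤ) m (F e) = if Q e m then 1 else 0 := by
    intro e m
    have hm : m = 0 ↔ m 0 = 0 ∧ m 1 = 0 := by
      constructor
      · rintro rfl; simp
      · rintro ⟨h0, h1⟩
        exact fin2_finsupp_ext (by simpa using h0) (by simpa using h1)
    by_cases hI : I e <;> by_cases hX : X e <;>
      by_cases h0 : m 0 = 0 <;> by_cases h1 : m 1 = 0 <;>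
      simp [hF, hQ, hI, hX, h0, h1, coeff_genU, coeff_genV, coeff_mid,
        MvPowerSeries.coeff_one, hm]
  -- RHS as a product over E
  have hprod : genU ^ {e : E | I e ∧ ¬ X e}.ncard * genV ^ {e : E | X e ∧ ¬ I e}.ncard *
      (genU + genV - 1) ^ {e : E | I e ∧ X e}.ncard = ∏ e : E, F e := by
    have h1 : ∀ e : E, F e =
        genU ^ (if I e ∧ ¬ X e then 1 else 0) * genV ^ (if X e ∧ ¬ I e then 1 else 0) *
          (genU + genV - 1) ^ (if I e ∧ X e then 1 else 0) := by
      intro e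
      by_cases hI : I e <;> by_cases hX : X e <;> simp [hF, hI, hX]
    rw [Finset.prod_congr rfl (fun e _ => h1 e)]
    rw [Finset.prod_mul_distrib, Finset.prod_mul_distrib,
      Finset.prod_pow_eq_pow_sum, Finset.prod_pow_eq_pow_sum, Finset.prod_pow_eq_pow_sum]
    congr 3 <;> rw [ncard_setOf_eq_sum]
  rw [hprod, MvPowerSeries.coeff_prod]
  have h2 : ∀ l ∈ Finset.finsuppAntidiag (Finset.univ : Finset E) n,
      ∏ e : E, MvPowerSeries.coeff (R := ℤ) (l e) (F e) =
      if (∀ e : E, Q e (l e)) then (1 : ℤ) else 0 := by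
    intro l _
    rw [Finset.prod_congr rfl (fun e _ => coeff_F e (l e)), Finset.prod_boole]
    simp
  rw [Finset.sum_congr rfl h2, Finset.sum_boole]
  -- the bijection
  set T := (Finset.finsuppAntidiag (Finset.univ : Finset E) n).filter
    (fun l => ∀ e : E, Q e (l e)) with hT
  set g : (E →₀ (Fin 2 →₀ ℕ)) → (E → ℤ) := fun l e => b e - (l e 0 : ℤ) + (l e 1 : ℤ) with hg
  have hginj : Set.InjOn g ↑T := by
    intro l hl l' hl' hgl
    simp only [hT, Finset.coe_filter, Set.mem_setOf_eq] at hl hl'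
    ext e t
    have he : g l e = g l' e := congrFun hgl e
    have h1 := (hl.2 e).2.2
    have h2 := (hl'.2 e).2.2
    simp only [hg] at he
    have h0 : l e 0 = l' e 0 ∧ l e 1 = l' e 1 := by omega
    have : l e = l' e := fin2_finsupp_ext h0.1 h0.2
    rw [this]
  have himg : {y ∈ {y : E → ℤ | ∀ e : E, (b e < y e → X e) ∧ (y e < b e → I e)} |
      dGt b y = i ∧ dLt b y = j} = g '' ↑T := by
    ext y
    constructor
    · rintro ⟨hy, hdg, hdl⟩
      set l : E →₀ (Fin 2 →₀ ℕ) := Finsupp.equivFunOnFinite.symm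
        (fun e => Finsupp.single 0 (b e - y e).toNat + Finsupp.single 1 (y e - b e).toNat)
        with hl
      have hle : ∀ e, l e = Finsupp.single 0 (b e - y e).toNat +
          Finsupp.single 1 (y e - b e).toNat := fun e => rfl
      have hl0 : ∀ e : E, l e 0 = (b e - y e).toNat := by
        intro e; rw [hle]; simp [Finsupp.single_apply]
      have hl1 : ∀ e : E, l e 1 = (y e - b e).toNat := by
        intro e; rw [hle]; simp [Finsupp.single_apply]
      refine ⟨l, ?_, ?_⟩
      · simp only [hT, Finset.coe_filter, Set.mem_setOf_eq]
        refine ⟨Finset.mem_finsuppAntidiag.2 ⟨?_, by simp⟩, ?_⟩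
        · apply fin2_finsupp_ext
          · rw [Finset.sum_apply']
            rw [Finset.sum_congr rfl (fun e _ => hl0 e)]
            rw [hn0, ← hdg]; rfl
          · rw [Finset.sum_apply']
            rw [Finset.sum_congr rfl (fun e _ => hl1 e)]
            rw [hn1, ← hdl]; rfl
        · intro e
          refine ⟨fun h => (hy e).2 (by rw [hl0] at h; omega),
            fun h => (hy e).1 (by rw [hl1] at h; omega), ?_⟩
          rw [hl0, hl1]; omega
      · funext e
        simp only [hg, hl0, hl1]
        omega
    · rintro ⟨l, hl, rfl⟩
      simp only [hT, Finset.coe_filter, Set.mem_setOf_eq] at hl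
      obtain ⟨hanti, hQl⟩ := hl
      have hsum := (Finset.mem_finsuppAntidiag.1 hanti).1
      have hs0 : ∑ e : E, l e 0 = i := by
        rw [← hn0, ← hsum, Finset.sum_apply']
      have hs1 : ∑ e : E, l e 1 = j := by
        rw [← hn1, ← hsum, Finset.sum_apply']
      refine ⟨fun e => ⟨fun h => (hQl e).2.1 ?_, fun h => (hQl e).1 ?_⟩, ?_, ?_⟩
      · simp only [hg] at h; omega
      · simp only [hg] at h; omega
      · rw [← hs0]
        apply Finset.sum_congr rfl
        intro e _
        have := (hQl e).2.2
        simp only [hg]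
        omega
      · rw [← hs1]
        apply Finset.sum_congr rfl
        intro e _
        have := (hQl e).2.2
        simp only [hg]
        omega
  rw [himg, Set.ncard_image_of_injOn hginj, Set.ncard_coe_finset]


/-- Crapo decomposition of the corank-nullity generating function over a single Crapo
interval: for every `(i,j)`, the number of lattice points `y` of the Crapo interval of
`b` with `d₁^>(b,y) = i` and `d₁^<(b,y) = j` is the coefficient of `uⁱvʲ` in
`(1/(1−u))^{oi(b)} (1/(1−v))^{oe(b)} (1/(1−u) + 1/(1−v) − 1)^{ie(b)}`. -/
theorem crapo_interval_generating_function (P : Set (E → ℤ)) (hP : IsPolymatroid P)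
    (lt : E → E → Prop) (hlt : IsStrictTotalOrder E lt)
    (b : E → ℤ) (hb : b ∈ P) (c : E → ℤ) (hc : c ∈ CrapoInterval P lt b)
    (hmin : ∀ b' ∈ P, d1 b c ≤ d1 b' c) :
    ∀ i j : ℕ,
      ({y ∈ CrapoInterval P lt b | dGt b y = i ∧ dLt b y = j}.ncard : ℤ) =
        MvPowerSeries.coeff (R := ℤ) (Finsupp.single 0 i + Finsupp.single 1 j)
          (genU ^ oi P lt b * genV ^ oe P lt b *
            (genU + genV - 1) ^ ie P lt b) := by
  intro i j
  exact key (IntActive P lt b) (ExtActive P lt b) b i j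
end
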